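/- arXiv:2306.11398 — 7 statements merged into one kernel-verified Lean document; each statement's English description precedes it below -/
import Mathlib

section
/- For the one-dimensional damped wave boundary eigenvalue problem with wave speed c > 0, interval length L > 0 and feedback gain ξ with 0 < ξ < c, a complex number λ admits a nonzero C² function v : [0,L] → ℂ satisfying c² v''(x) = λ² v(x) on [0,L], v(0) = 0, and c² v'(L) = −ξ λ v(L) if and only if λ = −(c/(2L))·ln((c+ξ)/(c−ξ)) + ((2k+1)π c/(2L))·i for some integer k. -/
/-!
Writing `λ = c m`, the equation becomes `v'' = m² v`, whose first integrals
`(v' ∓ m v) e^{± m x}` are constant. With `v 0 = 0` they give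
`2 m v = v'(0) (e^{m x} - e^{-m x})` and `2 v' = v'(0) (e^{m x} + e^{-m x})`, so a nonzero
eigenfunction has `m ≠ 0` (for `m = 0`, `v'` is constant and vanishes at `L`) and `v'(0) ≠ 0`,
and the boundary condition at `L` becomes `(c + ξ) e^{2 m L} = ξ - c`. Conversely
`e^{m x} - e^{-m x}` is an eigenfunction for every such `m`. Since `(c - ξ)/(c + ξ) > 0`, the
solutions of `e^{2 m L} = -(c - ξ)/(c + ξ)` are read off from the real logarithm and
`e^{π i} = -1`.
-/

open Set Complex

theorem Complex.exp_eq_neg_ofReal_iff {r : ℝ} (hr : 0 < r) {z : ℂ} :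
    exp z = -r ↔ ∃ k : ℤ, z = Real.log r + (2 * k + 1) * Real.pi * I := by
  have hneg : (-r : ℂ) = exp (Real.log r + Real.pi * I) := by
    rw [exp_add, exp_pi_mul_I, ← ofReal_exp, Real.exp_log hr, mul_neg_one]
  rw [hneg, exp_eq_exp_iff_exists_int]
  refine exists_congr fun k => ?_
  ring_nf

theorem constant_of_hasDerivWithinAt_Icc_zero {E : Type*} [NormedAddCommGroup E]
    [NormedSpace ℝ E] {a b : ℝ} {f : ℝ → E}
    (hf : ∀ x ∈ Icc a b, HasDerivWithinAt f 0 (Icc a b) x) :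
    ∀ x ∈ Icc a b, f x = f a :=
  constant_of_has_deriv_right_zero (fun x hx => (hf x hx).continuousWithinAt) fun x hx =>
    (hf x (Ico_subset_Icc_self hx)).mono_of_mem_nhdsWithin (Icc_mem_nhdsGE_of_mem hx)

theorem hasDerivAt_cexp_const_mul (m : ℂ) (x : ℝ) :
    HasDerivAt (fun x : ℝ => exp (m * x)) (exp (m * x) * m) x := by
  simpa using ((ofRealCLM.hasDerivAt (x := x)).const_mul m).cexp

section SecondOrderLinearODE

variable {a b : ℝ} {m : ℂ} {v v' v'' : ℝ → ℂ}

theorem first_integral_of_deriv_deriv_eq_sq_mul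
    (hv : ∀ x ∈ Icc a b, HasDerivWithinAt v (v' x) (Icc a b) x)
    (hv' : ∀ x ∈ Icc a b, HasDerivWithinAt v' (v'' x) (Icc a b) x)
    (hode : ∀ x ∈ Icc a b, v'' x = m ^ 2 * v x) :
    ∀ x ∈ Icc a b, (v' x - m * v x) * exp (m * x) = (v' a - m * v a) * exp (m * a) :=
  constant_of_hasDerivWithinAt_Icc_zero fun x hx =>
    (((hv' x hx).sub ((hv x hx).const_mul m)).mul
      (hasDerivAt_cexp_const_mul m x).hasDerivWithinAt).congr_deriv
      (by simp only [Pi.sub_apply]; linear_combination exp (m * x) * hode x hx)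

theorem two_mul_eq_exp_sub_exp_of_deriv_deriv_eq_sq_mul
    (hv : ∀ x ∈ Icc 0 b, HasDerivWithinAt v (v' x) (Icc 0 b) x)
    (hv' : ∀ x ∈ Icc 0 b, HasDerivWithinAt v' (v'' x) (Icc 0 b) x)
    (hode : ∀ x ∈ Icc 0 b, v'' x = m ^ 2 * v x) (hv0 : v 0 = 0) {x : ℝ} (hx : x ∈ Icc 0 b) :
    2 * m * v x = v' 0 * (exp (m * x) - exp (-m * x)) ∧
      2 * v' x = v' 0 * (exp (m * x) + exp (-m * x)) := by
  have hplus := first_integral_of_deriv_deriv_eq_sq_mul hv hv' hode x hx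
  have hminus := first_integral_of_deriv_deriv_eq_sq_mul hv hv' (m := -m)
    (fun x hx => by rw [neg_sq]; exact hode x hx) x hx
  have hexp : exp (m * x) * exp (-m * x) = 1 := by rw [← exp_add]; ring_nf; exact exp_zero
  simp only [hv0, mul_zero, sub_zero, ofReal_zero, exp_zero, mul_one] at hplus hminus
  constructor
  · linear_combination exp (m * x) * hminus - exp (-m * x) * hplus - 2 * m * v x * hexp
  · linear_combination exp (m * x) * hminus + exp (-m * x) * hplus - 2 * v' x * hexp

end SecondOrderLinearODE

section DampedWave

variable {c L ξ : ℝ} {lam : ℂ}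

theorem damped_wave_char_eq_iff (hc : 0 < c) (hL : L ≠ 0) (hξ0 : 0 < ξ) (hξc : ξ < c) :
    (c + ξ) * exp (2 * L * (lam / c)) = ξ - c ↔
      ∃ k : ℤ, lam = ((-(c / (2 * L)) * Real.log ((c + ξ) / (c - ξ)) : ℝ) : ℂ) +
        (((2 * (k : ℝ) + 1) * Real.pi * c / (2 * L) : ℝ) : ℂ) * I := by
  have hsum : (c + ξ : ℂ) ≠ 0 := by exact_mod_cast (by linarith : c + ξ ≠ 0)
  have hc' : (c : ℂ) ≠ 0 := ofReal_ne_zero.2 hc.ne'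
  have hL' : (L : ℂ) ≠ 0 := ofReal_ne_zero.2 hL
  rw [mul_comm, ← eq_div_iff hsum,
    show ((ξ : ℂ) - c) / (c + ξ) = -((c - ξ) / (c + ξ) : ℝ) by push_cast; ring,
    exp_eq_neg_ofReal_iff (div_pos (by linarith) (by linarith))]
  refine exists_congr fun k => ?_
  rw [show Real.log ((c + ξ) / (c - ξ)) = -Real.log ((c - ξ) / (c + ξ)) by
    rw [← Real.log_inv, inv_div]]
  push_cast
  constructor <;> intro h
  · rw [show lam = c / (2 * L) * (2 * L * (lam / c)) by field_simp, h]
    ring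
  · rw [h]
    field_simp

theorem damped_wave_char_eq_of_eigenfunction {v v' v'' : ℝ → ℂ} (hc : c ≠ 0)
    (hv : ∀ x ∈ Icc 0 L, HasDerivWithinAt v (v' x) (Icc 0 L) x)
    (hv' : ∀ x ∈ Icc 0 L, HasDerivWithinAt v' (v'' x) (Icc 0 L) x)
    (hode : ∀ x ∈ Icc 0 L, (c ^ 2 : ℂ) * v'' x = lam ^ 2 * v x) (hv0 : v 0 = 0)
    (hbc : (c ^ 2 : ℂ) * v' L = -(ξ : ℂ) * lam * v L) {x₀ : ℝ} (hx₀ : x₀ ∈ Icc 0 L)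
    (hvx₀ : v x₀ ≠ 0) :
    (c + ξ) * exp (2 * L * (lam / c)) = ξ - c := by
  have hc' : (c : ℂ) ≠ 0 := ofReal_ne_zero.2 hc
  obtain ⟨m, rfl⟩ : ∃ m, lam = c * m := ⟨lam / c, by field_simp⟩
  have hL : L ∈ Icc 0 L := right_mem_Icc.2 (hx₀.1.trans hx₀.2)
  have hmode : ∀ x ∈ Icc 0 L, v'' x = m ^ 2 * v x := fun x hx =>
    mul_left_cancel₀ (pow_ne_zero 2 hc') (by rw [hode x hx]; ring)
  have hsol := fun x (hx : x ∈ Icc 0 L) =>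
    two_mul_eq_exp_sub_exp_of_deriv_deriv_eq_sq_mul hv hv' hmode hv0 hx
  have hbc' : c * v' L = -ξ * m * v L := mul_left_cancel₀ hc' (by linear_combination hbc)
  have hm : m ≠ 0 := by
    rintro rfl
    have hv'L : v' L = 0 := by simpa [hc'] using hbc'
    have hv'_zero : ∀ x ∈ Icc 0 L, v' x = 0 := fun x hx => by
      have hx' := (hsol x hx).2
      have hL' := (hsol L hL).2
      simp only [zero_mul, neg_zero, exp_zero] at hx' hL'
      linear_combination (hx' - hL') / 2 + hv'L
    apply hvx₀
    rw [constant_of_hasDerivWithinAt_Icc_zero (f := v) (fun x hx => hv'_zero x hx ▸ hv x hx)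
      x₀ hx₀, hv0]
  have hA : v' 0 ≠ 0 := by
    intro hA
    simpa [hA, hm, hvx₀] using (hsol x₀ hx₀).1
  set E := exp (m * L)
  have hEF : E * exp (-m * L) = 1 := by rw [← exp_add]; ring_nf; exact exp_zero
  have hchar : v' 0 * ((c + ξ) * E ^ 2 - (ξ - c)) = 0 := by
    linear_combination E * (2 * hbc' - c * (hsol L hL).2 - ξ * (hsol L hL).1)
      - v' 0 * (c - ξ) * hEF
  rw [mul_div_cancel_left₀ m hc', show 2 * (L : ℂ) * m = m * L + m * L by ring, exp_add, ← sq]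
  linear_combination (mul_eq_zero.1 hchar).resolve_left hA

theorem damped_wave_exists_eigenfunction_of_char_eq (hc : c ≠ 0) (hL : 0 ≤ L)
    (hchar : (c + ξ) * exp (2 * L * (lam / c)) = ξ - c) :
    ∃ v v' v'' : ℝ → ℂ,
      (∀ x ∈ Icc 0 L, HasDerivWithinAt v (v' x) (Icc 0 L) x) ∧
      (∀ x ∈ Icc 0 L, HasDerivWithinAt v' (v'' x) (Icc 0 L) x) ∧
      ContinuousOn v'' (Icc 0 L) ∧
      (∃ x ∈ Icc 0 L, v x ≠ 0) ∧
      (∀ x ∈ Icc 0 L, (c ^ 2 : ℂ) * v'' x = lam ^ 2 * v x) ∧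
      v 0 = 0 ∧
      (c ^ 2 : ℂ) * v' L = -(ξ : ℂ) * lam * v L := by
  have hc' : (c : ℂ) ≠ 0 := ofReal_ne_zero.2 hc
  obtain ⟨m, rfl⟩ : ∃ m, lam = c * m := ⟨lam / c, by field_simp⟩
  rw [mul_div_cancel_left₀ m hc', show 2 * (L : ℂ) * m = m * L + m * L by ring,
    exp_add] at hchar
  have hEF : exp (m * L) * exp (-m * L) = 1 := by rw [← exp_add]; ring_nf; exact exp_zero
  have hderiv (x : ℝ) : HasDerivAt (fun x : ℝ => exp (m * x) - exp (-m * x))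
      (m * (exp (m * x) + exp (-m * x))) x :=
    ((hasDerivAt_cexp_const_mul m x).sub (hasDerivAt_cexp_const_mul (-m) x)).congr_deriv
      (by ring)
  have hderiv' (x : ℝ) : HasDerivAt (fun x : ℝ => m * (exp (m * x) + exp (-m * x)))
      (m ^ 2 * (exp (m * x) - exp (-m * x))) x :=
    (((hasDerivAt_cexp_const_mul m x).add (hasDerivAt_cexp_const_mul (-m) x)).const_mul
      m).congr_deriv (by ring)
  refine ⟨_, _, fun x => m ^ 2 * (exp (m * x) - exp (-m * x)),
    fun x _ => (hderiv x).hasDerivWithinAt, fun x _ => (hderiv' x).hasDerivWithinAt,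
    by fun_prop, ⟨L, right_mem_Icc.2 hL, fun hvL => hc' ?_⟩, fun x _ => by ring,
    by simp, mul_left_cancel₀ (exp_ne_zero (m * L)) ?_⟩
  · linear_combination (hchar - (c + ξ) * exp (m * L) * hvL - (c + ξ) * hEF) / 2
  · linear_combination c * m * hchar + c * m * (c - ξ) * hEF

end DampedWave

/-- λ is an eigenvalue of the boundary-damped wave operator
(i.e. admits a nonzero C² eigenfunction) iff
λ = −(c/(2L))·ln((c+ξ)/(c−ξ)) + ((2k+1)πc/(2L))·i for some integer k. -/
theorem damped_wave_eigenvalues (c L ξ : ℝ) (hc : 0 < c) (hL : 0 < L)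
    (hξ0 : 0 < ξ) (hξc : ξ < c) (lam : ℂ) :
    (∃ v v' v'' : ℝ → ℂ,
      (∀ x ∈ Icc (0:ℝ) L, HasDerivWithinAt v (v' x) (Icc 0 L) x) ∧
      (∀ x ∈ Icc (0:ℝ) L, HasDerivWithinAt v' (v'' x) (Icc 0 L) x) ∧
      ContinuousOn v'' (Icc 0 L) ∧
      (∃ x ∈ Icc (0:ℝ) L, v x ≠ 0) ∧
      (∀ x ∈ Icc (0:ℝ) L, (c^2 : ℂ) * v'' x = lam^2 * v x) ∧
      v 0 = 0 ∧
      (c^2 : ℂ) * v' L = -(ξ : ℂ) * lam * v L) ↔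
    ∃ k : ℤ, lam = ((-(c/(2*L)) * Real.log ((c+ξ)/(c-ξ)) : ℝ) : ℂ) +
      (((2*(k:ℝ)+1) * Real.pi * c / (2*L) : ℝ) : ℂ) * Complex.I := by
  rw [← damped_wave_char_eq_iff hc hL.ne' hξ0 hξc]
  constructor
  · rintro ⟨v, v', v'', hv, hv', -, ⟨x₀, hx₀, hvx₀⟩, hode, hv0, hbc⟩
    exact damped_wave_char_eq_of_eigenfunction hc.ne' hv hv' hode hv0 hbc hx₀ hvx₀
  · exact damped_wave_exists_eigenfunction_of_char_eq hc.ne' hL.le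
end

section
/- Let L, c > 0 and T > 2L/c. There exists a constant C > 0 (depending only on T, L, c) such that for every C² function v : [0,L] × [0,T] → ℝ satisfying v_tt = c² v_xx on (0,L) × (0,T) with v(0,t) = 0 and v_x(L,t) = 0 for all t ∈ [0,T], one has ∫₀^T |v_t(L,t)|² dt ≥ C·E(0), where E(0) = (1/2)∫₀^L ( v_t(x,0)² + c² v_x(x,0)² ) dx. -/
/-!
The potential `W(x, t) = ∫₀ˣ v_t(y, 0) dy + c² ∫₀ᵗ v_x(x, s) ds` satisfies `W_t = c² v_x` and,
by Fubini and the wave equation, `W_x = v_t`. Hence `W ∓ c v` solve transport equations and are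
constant along the characteristics `x ∓ c t = const`; no mixed derivatives of `v` are needed.
Following the characteristic through `(L, t)` back to `t = 0` (directly when `t ≤ L/c`, after one
reflection at the Dirichlet end when `L/c ≤ t ≤ 2L/c`) and using the Neumann condition
`∂ₜ(W - c v)(L, t) = -c v_t(L, t)` gives `v_t(L, t) = (v_t - c v_x)(L - c t, 0)`, resp.
`v_t(L, t) = -(v_t + c v_x)(c t - L, 0)`. Squaring and integrating,
`∫₀^{2L/c} v_t(L, t)² dt = (2/c) ∫₀ᴸ (v_t² + c² v_x²)(x, 0) dx = (4/c) E(0)`.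
-/

open Set Function MeasureTheory

theorem hasFDerivWithinAt_uncurry_coprod
    {E₁ E₂ F : Type*} [NormedAddCommGroup E₁] [NormedSpace ℝ E₁] [NormedAddCommGroup E₂]
    [NormedSpace ℝ E₂] [NormedAddCommGroup F] [NormedSpace ℝ F]
    {f : E₁ → E₂ → F} {f₁ : E₁ → E₂ → E₁ →L[ℝ] F} {f₂ : E₂ →L[ℝ] F} {s₁ : Set E₁}
    {s₂ : Set E₂} {x : E₁} {y : E₂} (hs₁ : Convex ℝ s₁) (hx : x ∈ s₁)
    (hf₁ : ∀ x' ∈ s₁, ∀ y' ∈ s₂, HasFDerivWithinAt (f · y') (f₁ x' y') s₁ x')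
    (hc : ContinuousWithinAt (uncurry f₁) (s₁ ×ˢ s₂) (x, y))
    (hf₂ : HasFDerivWithinAt (f x) f₂ s₂ y) :
    HasFDerivWithinAt (uncurry f) ((f₁ x y).coprod f₂) (s₁ ×ˢ s₂) (x, y) := by
  have h₁ : HasFDerivWithinAt (fun p : E₁ × E₂ => f p.1 p.2 - f x p.2)
      ((f₁ x y).comp (ContinuousLinearMap.fst ℝ E₁ E₂)) (s₁ ×ˢ s₂) (x, y) := by
    refine .of_isLittleO (Asymptotics.isLittleO_iff.2 fun ε hε => ?_)
    obtain ⟨δ, hδ, hclose⟩ := Metric.continuousWithinAt_iff.1 hc ε hε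
    filter_upwards [self_mem_nhdsWithin, mem_nhdsWithin_of_mem_nhds (Metric.ball_mem_nhds _ hδ)]
      with p hp hpδ
    rw [Metric.mem_ball, Prod.dist_eq] at hpδ
    have hmvt : ‖(f p.1 p.2 - f₁ x y p.1) - (f x p.2 - f₁ x y x)‖ ≤ ε * ‖p.1 - x‖ := by
      refine (hs₁.inter (convex_ball x δ)).norm_image_sub_le_of_norm_hasFDerivWithin_le
        (f := fun z => f z p.2 - f₁ x y z) (f' := fun z => f₁ z p.2 - f₁ x y)
        (fun z hz => ((hf₁ z hz.1 p.2 hp.2).sub (f₁ x y).hasFDerivWithinAt).mono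
          inter_subset_left) (fun z hz => ?_) ⟨hx, Metric.mem_ball_self hδ⟩ ⟨hp.1, ?_⟩
      · rw [← dist_eq_norm]
        refine (hclose (mk_mem_prod hz.1 hp.2) ?_).le
        rw [Prod.dist_eq]
        exact max_lt hz.2 ((le_max_right _ _).trans_lt hpδ)
      · exact (le_max_left _ _).trans_lt hpδ
    calc _ = ‖(f p.1 p.2 - f₁ x y p.1) - (f x p.2 - f₁ x y x)‖ := by
          simp only [sub_self, sub_zero, ContinuousLinearMap.coe_comp,
            comp_apply, ContinuousLinearMap.coe_fst', map_sub]
          congr 1; abel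
      _ ≤ ε * ‖p.1 - x‖ := hmvt
      _ ≤ ε * ‖p - (x, y)‖ := by gcongr; exact norm_fst_le (p - (x, y))
  have h₂ : HasFDerivWithinAt (fun p : E₁ × E₂ => f x p.2)
      (f₂.comp (ContinuousLinearMap.snd ℝ E₁ E₂)) (s₁ ×ˢ s₂) (x, y) :=
    hf₂.comp (x, y) hasFDerivWithinAt_snd (fun p hp => hp.2)
  have hf : uncurry f = (fun p : E₁ × E₂ => f p.1 p.2 - f x p.2) + fun p => f x p.2 := by
    funext p; simp only [Pi.add_apply, sub_add_cancel]; rfl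
  rw [hf]
  exact (h₁.add h₂).congr_fderiv (by ext <;> simp)

theorem transport_eq_along_characteristic {f fx ft : ℝ → ℝ → ℝ} {s u : Set ℝ} {m : ℝ}
    (hs : Convex ℝ s)
    (hfx : ∀ x ∈ s, ∀ t ∈ u, HasDerivWithinAt (f · t) (fx x t) s x)
    (hft : ∀ x ∈ s, ∀ t ∈ u, HasDerivWithinAt (f x ·) (ft x t) u t)
    (hcx : ContinuousOn (uncurry fx) (s ×ˢ u))
    (htransport : ∀ x ∈ s, ∀ t ∈ u, ft x t + m * fx x t = 0)
    {w t₁ t₂ : ℝ} (ht : t₁ ≤ t₂) (hline : ∀ r ∈ Icc t₁ t₂, w + m * r ∈ s ∧ r ∈ u) :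
    f (w + m * t₂) t₂ = f (w + m * t₁) t₁ := by
  have hderiv : ∀ r ∈ Icc t₁ t₂,
      HasDerivWithinAt (fun r => f (w + m * r) r) 0 (Icc t₁ t₂) r := by
    intro r hr
    obtain ⟨hxr, htr⟩ := hline r hr
    have hf := hasFDerivWithinAt_uncurry_coprod
      (f₁ := fun x t => ContinuousLinearMap.toSpanSingleton ℝ (fx x t)) hs hxr
      (fun x hx t ht => (hfx x hx t ht).hasFDerivWithinAt)
      ((ContinuousLinearMap.toSpanSingletonCLE.continuous.comp_continuousOn hcx) _
        (mk_mem_prod hxr htr)) (hft _ hxr _ htr).hasFDerivWithinAt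
    have hγ : HasDerivWithinAt (fun r => (w + m * r, r)) (m, 1) (Icc t₁ t₂) r :=
      (((hasDerivAt_id r).const_mul m).const_add w |>.prodMk (hasDerivAt_id r)).hasDerivWithinAt
        |>.congr_deriv (by simp)
    have := hf.comp_hasDerivWithinAt (f := fun r => (w + m * r, r)) r hγ
      fun r' hr' => mk_mem_prod (hline r' hr').1 (hline r' hr').2
    rwa [ContinuousLinearMap.coprod_apply, ContinuousLinearMap.toSpanSingleton_apply,
      ContinuousLinearMap.toSpanSingleton_apply, smul_eq_mul, smul_eq_mul, one_mul, add_comm,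
      htransport _ hxr _ htr] at this
  have := (convex_Icc t₁ t₂).norm_image_sub_le_of_norm_hasDerivWithin_le hderiv
    (fun _ _ => norm_zero.le) (left_mem_Icc.2 ht) (right_mem_Icc.2 ht)
  simpa [sub_eq_zero] using this

section FundamentalTheorem

variable {E : Type*} [NormedAddCommGroup E] [NormedSpace ℝ E] [CompleteSpace E] {f f' : ℝ → E}
  {a b u v : ℝ}

theorem integral_eq_sub_of_hasDerivWithinAt_Icc
    (hf : ∀ x ∈ Icc a b, HasDerivWithinAt f (f' x) (Icc a b) x) (hf' : ContinuousOn f' (Icc a b))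
    (hu : u ∈ Icc a b) (hv : v ∈ Icc a b) : ∫ x in u..v, f' x = f v - f u := by
  have hsub : uIcc u v ⊆ Icc a b := uIcc_subset_Icc hu hv
  refine intervalIntegral.integral_eq_sub_of_hasDeriv_right
    (fun x hx => (hf x (hsub hx)).continuousWithinAt.mono hsub) (fun x hx => ?_)
    (hf'.mono hsub).intervalIntegrable
  have hx' : x ∈ Ioo a b := Ioo_subset_Ioo (le_min hu.1 hv.1) (max_le hu.2 hv.2) hx
  exact ((hf x (Ioo_subset_Icc_self hx')).hasDerivAt (Icc_mem_nhds hx'.1 hx'.2)).hasDerivWithinAt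

theorem ContinuousOn.hasDerivWithinAt_integral_Icc (hf : ContinuousOn f (Icc a b))
    (hu : u ∈ Icc a b) (hv : v ∈ Icc a b) :
    HasDerivWithinAt (fun z => ∫ y in u..z, f y) (f v) (Icc a b) v :=
  have : Fact (v ∈ Icc a b) := ⟨hv⟩
  intervalIntegral.integral_hasDerivWithinAt_right
    (hf.mono (uIcc_subset_Icc hu hv)).intervalIntegrable
    (hf.stronglyMeasurableAtFilter_nhdsWithin measurableSet_Icc v) (hf v hv)

end FundamentalTheorem

theorem intervalIntegral_integral_swap {f : ℝ → ℝ → ℝ} {a b c d : ℝ} (hab : a ≤ b) (hcd : c ≤ d)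
    (hf : ContinuousOn (uncurry f) (Icc a b ×ˢ Icc c d)) :
    ∫ x in a..b, ∫ y in c..d, f x y = ∫ y in c..d, ∫ x in a..b, f x y := by
  simp only [intervalIntegral.integral_of_le hab, intervalIntegral.integral_of_le hcd]
  refine integral_integral_swap ?_
  rw [Measure.prod_restrict]
  exact (hf.integrableOn_compact (isCompact_Icc.prod isCompact_Icc)).mono_set
    (prod_mono Ioc_subset_Icc_self Ioc_subset_Icc_self)

/-- The line integral of `P dx + Q dt` along the path `(a, a') → (x, a') → (x, t)`. -/
noncomputable def potential (P Q : ℝ → ℝ → ℝ) (a a' x t : ℝ) : ℝ :=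
  (∫ y in a..x, P y a') + ∫ s in a'..t, Q x s

section Potential

variable {P Q R : ℝ → ℝ → ℝ} {a b a' b' x t : ℝ}

theorem hasDerivWithinAt_potential_snd (hQ : ContinuousOn (uncurry Q) (Icc a b ×ˢ Icc a' b'))
    (hx : x ∈ Icc a b) (ht : t ∈ Icc a' b') :
    HasDerivWithinAt (potential P Q a a' x) (Q x t) (Icc a' b') t :=
  ((hQ.uncurry_left x hx).hasDerivWithinAt_integral_Icc (left_mem_Icc.2 (ht.1.trans ht.2))
    ht).const_add _

/-- When `∂P/∂t = ∂Q/∂x`, the path `(a, a') → (a, t) → (x, t)` gives the same value. -/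
theorem potential_eq_other_path (hP : ContinuousOn (uncurry P) (Icc a b ×ˢ Icc a' b'))
    (hQ : ContinuousOn (uncurry Q) (Icc a b ×ˢ Icc a' b'))
    (hR : ContinuousOn (uncurry R) (Icc a b ×ˢ Icc a' b'))
    (hPt : ∀ x ∈ Icc a b, ∀ t ∈ Icc a' b', HasDerivWithinAt (P x ·) (R x t) (Icc a' b') t)
    (hQx : ∀ x ∈ Icc a b, ∀ t ∈ Icc a' b', HasDerivWithinAt (Q · t) (R x t) (Icc a b) x)
    (hx : x ∈ Icc a b) (ht : t ∈ Icc a' b') :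
    potential P Q a a' x t = (∫ y in a..x, P y t) + ∫ s in a'..t, Q a s := by
  have ha : a ∈ Icc a b := left_mem_Icc.2 (hx.1.trans hx.2)
  have ha' : a' ∈ Icc a' b' := left_mem_Icc.2 (ht.1.trans ht.2)
  have hsubx : uIcc a x ⊆ Icc a b := uIcc_subset_Icc ha hx
  have hsubt : uIcc a' t ⊆ Icc a' b' := uIcc_subset_Icc ha' ht
  have hswap := intervalIntegral_integral_swap hx.1 ht.1
    (hR.mono (prod_mono (uIcc_of_le hx.1 ▸ hsubx) (uIcc_of_le ht.1 ▸ hsubt)))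
  have hPint (s) (hs : s ∈ Icc a' b') : IntervalIntegrable (P · s) volume a x :=
    ((hP.uncurry_right s hs).mono hsubx).intervalIntegrable
  have hQint (y) (hy : y ∈ Icc a b) : IntervalIntegrable (Q y) volume a' t :=
    ((hQ.uncurry_left y hy).mono hsubt).intervalIntegrable
  have hdiff : (∫ y in a..x, P y t) - ∫ y in a..x, P y a'
      = (∫ s in a'..t, Q x s) - ∫ s in a'..t, Q a s := by
    calc (∫ y in a..x, P y t) - ∫ y in a..x, P y a'
        = ∫ y in a..x, ∫ s in a'..t, R y s := by
          rw [← intervalIntegral.integral_sub (hPint t ht) (hPint a' ha')]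
          refine intervalIntegral.integral_congr fun y hy => ?_
          exact (integral_eq_sub_of_hasDerivWithinAt_Icc (hPt y (hsubx hy))
            (hR.uncurry_left y (hsubx hy)) ha' ht).symm
      _ = ∫ s in a'..t, ∫ y in a..x, R y s := hswap
      _ = (∫ s in a'..t, Q x s) - ∫ s in a'..t, Q a s := by
          rw [← intervalIntegral.integral_sub (hQint x hx) (hQint a ha)]
          refine intervalIntegral.integral_congr fun s hs => ?_
          exact integral_eq_sub_of_hasDerivWithinAt_Icc (fun y hy => hQx y hy s (hsubt hs))
            (hR.uncurry_right s (hsubt hs)) ha hx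
  rw [potential]
  linarith

theorem hasDerivWithinAt_potential_fst (hP : ContinuousOn (uncurry P) (Icc a b ×ˢ Icc a' b'))
    (hQ : ContinuousOn (uncurry Q) (Icc a b ×ˢ Icc a' b'))
    (hR : ContinuousOn (uncurry R) (Icc a b ×ˢ Icc a' b'))
    (hPt : ∀ x ∈ Icc a b, ∀ t ∈ Icc a' b', HasDerivWithinAt (P x ·) (R x t) (Icc a' b') t)
    (hQx : ∀ x ∈ Icc a b, ∀ t ∈ Icc a' b', HasDerivWithinAt (Q · t) (R x t) (Icc a b) x)
    (hx : x ∈ Icc a b) (ht : t ∈ Icc a' b') :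
    HasDerivWithinAt (potential P Q a a' · t) (P x t) (Icc a b) x := by
  have ha : a ∈ Icc a b := left_mem_Icc.2 (hx.1.trans hx.2)
  refine (((hP.uncurry_right t ht).hasDerivWithinAt_integral_Icc ha hx).add_const
    (∫ s in a'..t, Q a s)).congr (fun y hy => potential_eq_other_path hP hQ hR hPt hQx hy ht)
    (potential_eq_other_path hP hQ hR hPt hQx hx ht)

end Potential

structure IsWaveSolution (c L T : ℝ) (v vx vt vxx vtt : ℝ → ℝ → ℝ) : Prop where
  hasDerivWithinAt_vx :
    ∀ x ∈ Icc 0 L, ∀ t ∈ Icc 0 T, HasDerivWithinAt (v · t) (vx x t) (Icc 0 L) x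
  hasDerivWithinAt_vxx :
    ∀ x ∈ Icc 0 L, ∀ t ∈ Icc 0 T, HasDerivWithinAt (vx · t) (vxx x t) (Icc 0 L) x
  hasDerivWithinAt_vt :
    ∀ x ∈ Icc 0 L, ∀ t ∈ Icc 0 T, HasDerivWithinAt (v x ·) (vt x t) (Icc 0 T) t
  hasDerivWithinAt_vtt :
    ∀ x ∈ Icc 0 L, ∀ t ∈ Icc 0 T, HasDerivWithinAt (vt x ·) (vtt x t) (Icc 0 T) t
  continuousOn_vx : ContinuousOn (uncurry vx) (Icc 0 L ×ˢ Icc 0 T)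
  continuousOn_vt : ContinuousOn (uncurry vt) (Icc 0 L ×ˢ Icc 0 T)
  continuousOn_vxx : ContinuousOn (uncurry vxx) (Icc 0 L ×ˢ Icc 0 T)
  wave : ∀ x ∈ Icc 0 L, ∀ t ∈ Icc 0 T, vtt x t = c ^ 2 * vxx x t
  dirichlet : ∀ t ∈ Icc 0 T, v 0 t = 0
  neumann : ∀ t ∈ Icc 0 T, vx L t = 0

/-- `W - m v` for the potential `W` of `v_t dx + c² v_x dt`. For `m = ±c` it is constant along the
characteristics `dx/dt = m`, and its `x`-derivative `v_t - m v_x` is a Riemann invariant. -/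
noncomputable def riemannPotential (c m : ℝ) (v vx vt : ℝ → ℝ → ℝ) (x t : ℝ) : ℝ :=
  potential vt (fun x t => c ^ 2 * vx x t) 0 0 x t - m * v x t

namespace IsWaveSolution

variable {c L T m : ℝ} {v vx vt vxx vtt : ℝ → ℝ → ℝ} (hv : IsWaveSolution c L T v vx vt vxx vtt)
include hv

theorem hasDerivWithinAt_riemannPotential_x {x t : ℝ} (hx : x ∈ Icc 0 L) (ht : t ∈ Icc 0 T) :
    HasDerivWithinAt (riemannPotential c m v vx vt · t) (vt x t - m * vx x t) (Icc 0 L) x :=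
  (hasDerivWithinAt_potential_fst (Q := fun x t => c ^ 2 * vx x t)
    (R := fun x t => c ^ 2 * vxx x t) hv.continuousOn_vt
    (hv.continuousOn_vx.const_smul (c ^ 2)) (hv.continuousOn_vxx.const_smul (c ^ 2))
    (fun x hx t ht => (hv.hasDerivWithinAt_vtt x hx t ht).congr_deriv (hv.wave x hx t ht))
    (fun x hx t ht => (hv.hasDerivWithinAt_vxx x hx t ht).const_mul _) hx ht).sub
    ((hv.hasDerivWithinAt_vx x hx t ht).const_mul m)

theorem hasDerivWithinAt_riemannPotential_t {x t : ℝ} (hx : x ∈ Icc 0 L) (ht : t ∈ Icc 0 T) :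
    HasDerivWithinAt (riemannPotential c m v vx vt x) (c ^ 2 * vx x t - m * vt x t)
      (Icc 0 T) t :=
  (hasDerivWithinAt_potential_snd (Q := fun x t => c ^ 2 * vx x t)
    (hv.continuousOn_vx.const_smul (c ^ 2)) hx ht).sub
    ((hv.hasDerivWithinAt_vt x hx t ht).const_mul m)

theorem riemannPotential_eq_along_characteristic (hm : m ^ 2 = c ^ 2) {x₁ x₂ t₁ t₂ : ℝ}
    (ht : t₁ ≤ t₂) (hx : x₂ = x₁ + m * (t₂ - t₁))
    (hline : ∀ r ∈ Icc t₁ t₂, x₁ + m * (r - t₁) ∈ Icc 0 L ∧ r ∈ Icc 0 T) :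
    riemannPotential c m v vx vt x₂ t₂ = riemannPotential c m v vx vt x₁ t₁ := by
  have h := transport_eq_along_characteristic (m := m) (w := x₁ - m * t₁) (convex_Icc 0 L)
    (fun _ hx _ ht => hv.hasDerivWithinAt_riemannPotential_x hx ht)
    (fun _ hx _ ht => hv.hasDerivWithinAt_riemannPotential_t hx ht)
    (hv.continuousOn_vt.sub (hv.continuousOn_vx.const_smul m))
    (fun x _ t _ => by linear_combination (-vx x t) * hm) ht
    fun r hr => by rw [show x₁ - m * t₁ + m * r = x₁ + m * (r - t₁) by ring]; exact hline r hr
  rwa [show x₁ - m * t₁ + m * t₂ = x₂ by rw [hx]; ring, sub_add_cancel] at h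

variable (hL : 0 < L) (hc : 0 < c)
include hL hc

theorem vt_right_end_eq (hLT : L / c ≤ T) {s : ℝ} (hs : s ∈ Icc 0 (L / c)) :
    vt L s = vt (L - c * s) 0 - c * vx (L - c * s) 0 := by
  have hLc : 0 < L / c := by positivity
  have hcLc : c * (L / c) = L := mul_div_cancel₀ L hc.ne'
  have hsub : Icc 0 (L / c) ⊆ Icc 0 T := Icc_subset_Icc le_rfl hLT
  have hmaps : MapsTo (fun r => L - c * r) (Icc 0 (L / c)) (Icc 0 L) := fun r hr =>
    ⟨by nlinarith [hr.2], by nlinarith [hr.1]⟩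
  have htrace : EqOn (riemannPotential c c v vx vt L)
      (fun r => riemannPotential c c v vx vt (L - c * r) 0) (Icc 0 (L / c)) := fun r hr =>
    hv.riemannPotential_eq_along_characteristic rfl hr.1 (by ring) fun r' hr' =>
      ⟨⟨by nlinarith [hr.2, hr'.1], by nlinarith [hr'.2]⟩, hsub ⟨hr'.1, hr'.2.trans hr.2⟩⟩
  have hleft := (hv.hasDerivWithinAt_riemannPotential_t (m := c) (right_mem_Icc.2 hL.le)
    (hsub hs)).mono hsub
  have hright := (hv.hasDerivWithinAt_riemannPotential_x (m := c) (hmaps hs)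
    (hsub (left_mem_Icc.2 hLc.le))).comp s
    (((hasDerivAt_id s).const_mul c).const_sub L).hasDerivWithinAt hmaps
  have h := (uniqueDiffOn_Icc hLc s hs).eq_deriv _ hleft (hright.congr htrace (htrace hs))
  rw [hv.neumann s (hsub hs)] at h
  exact mul_left_cancel₀ hc.ne' (by linarith)

theorem vt_right_end_eq_of_reflection (hLT : 2 * L / c ≤ T) {s : ℝ}
    (hs : s ∈ Icc (L / c) (2 * L / c)) :
    vt L s = -(vt (c * s - L) 0 + c * vx (c * s - L) 0) := by
  have hLc : 0 < L / c := by positivity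
  have hcLc : c * (L / c) = L := mul_div_cancel₀ L hc.ne'
  have h2Lc : 2 * L / c = 2 * (L / c) := mul_div_assoc 2 L c
  have hsub : Icc (L / c) (2 * L / c) ⊆ Icc 0 T := Icc_subset_Icc hLc.le hLT
  have hmaps : MapsTo (fun r => c * r - L) (Icc (L / c) (2 * L / c)) (Icc 0 L) := fun r hr =>
    ⟨by nlinarith [hr.1], by nlinarith [hr.2]⟩
  have hdir {r : ℝ} (hr : r ∈ Icc 0 T) :
      riemannPotential c c v vx vt 0 r = riemannPotential c (-c) v vx vt 0 r := by
    simp only [riemannPotential, hv.dirichlet r hr, mul_zero]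
  have htrace : EqOn (riemannPotential c c v vx vt L)
      (fun r => riemannPotential c (-c) v vx vt (c * r - L) 0) (Icc (L / c) (2 * L / c)) :=
    fun r hr => by
    have hr' : r - L / c ∈ Icc 0 T := ⟨by linarith [hr.1], by linarith [hr.2]⟩
    calc riemannPotential c c v vx vt L r = riemannPotential c c v vx vt 0 (r - L / c) :=
          hv.riemannPotential_eq_along_characteristic rfl (by linarith)
            (by rw [sub_sub_cancel, zero_add, hcLc]) fun r' hr' =>
              ⟨⟨by nlinarith [hr'.1], by nlinarith [hr'.2]⟩,
                ⟨by linarith [hr'.1, hr.1], by linarith [hr'.2, hr.2]⟩⟩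
      _ = riemannPotential c (-c) v vx vt 0 (r - L / c) := hdir hr'
      _ = riemannPotential c (-c) v vx vt (c * r - L) 0 :=
          hv.riemannPotential_eq_along_characteristic (m := -c) (by ring) hr'.1
            (by rw [sub_zero, neg_mul, mul_sub, hcLc]; ring) fun r' hr' =>
              ⟨⟨by nlinarith [hr'.2], by nlinarith [hr'.1, hr.2]⟩,
                ⟨hr'.1, by linarith [hr'.2, hr.2]⟩⟩
  have hleft := (hv.hasDerivWithinAt_riemannPotential_t (m := c) (right_mem_Icc.2 hL.le)
    (hsub hs)).mono hsub
  have hright := (hv.hasDerivWithinAt_riemannPotential_x (m := -c) (hmaps hs)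
    ⟨le_rfl, (by positivity : (0 : ℝ) ≤ 2 * L / c).trans hLT⟩).comp s
    (((hasDerivAt_id s).const_mul c).sub_const L).hasDerivWithinAt hmaps
  have h := (uniqueDiffOn_Icc (by linarith) s hs).eq_deriv _ hleft (hright.congr htrace (htrace hs))
  rw [hv.neumann s (hsub hs)] at h
  exact mul_left_cancel₀ hc.ne' (by linarith)

theorem integral_sq_vt_right_end (hLT : 2 * L / c ≤ T) :
    ∫ t in 0..2 * L / c, vt L t ^ 2 = 2 / c * ∫ x in 0..L, (vt x 0 ^ 2 + c ^ 2 * vx x 0 ^ 2) := by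
  have hLc : 0 < L / c := by positivity
  have hcLc : c * (L / c) = L := mul_div_cancel₀ L hc.ne'
  have hc2Lc : c * (2 * L / c) = 2 * L := mul_div_cancel₀ (2 * L) hc.ne'
  have hLc2 : L / c ≤ 2 * L / c := by rw [mul_div_assoc]; linarith
  have h0 : (0 : ℝ) ∈ Icc 0 T := ⟨le_rfl, hLc.le.trans (hLc2.trans hLT)⟩
  have hvt0 := hv.continuousOn_vt.uncurry_right 0 h0
  have hvx0 := hv.continuousOn_vx.uncurry_right 0 h0
  have hvtL : ContinuousOn (fun t => vt L t ^ 2) (Icc 0 T) :=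
    (hv.continuousOn_vt.uncurry_left L (right_mem_Icc.2 hL.le)).pow 2
  have hA : ∫ t in 0..L / c, vt L t ^ 2 = c⁻¹ * ∫ x in 0..L, (vt x 0 - c * vx x 0) ^ 2 := by
    rw [intervalIntegral.integral_congr
      (g := fun t => (vt (L - c * t) 0 - c * vx (L - c * t) 0) ^ 2)
      fun t ht => by rw [hv.vt_right_end_eq hL hc (hLc2.trans hLT)
        (by rwa [uIcc_of_le hLc.le] at ht)],
      intervalIntegral.integral_comp_sub_mul (fun x => (vt x 0 - c * vx x 0) ^ 2) hc.ne',
      hcLc, sub_self, mul_zero, sub_zero, smul_eq_mul]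
  have hB : ∫ t in L / c..2 * L / c, vt L t ^ 2
      = c⁻¹ * ∫ x in 0..L, (vt x 0 + c * vx x 0) ^ 2 := by
    rw [intervalIntegral.integral_congr
      (g := fun t => (vt (c * t - L) 0 + c * vx (c * t - L) 0) ^ 2)
      fun t ht => by rw [hv.vt_right_end_eq_of_reflection hL hc hLT
        (by rwa [uIcc_of_le hLc2] at ht), neg_sq],
      intervalIntegral.integral_comp_mul_sub (fun x => (vt x 0 + c * vx x 0) ^ 2) hc.ne',
      hcLc, hc2Lc, sub_self, two_mul, add_sub_cancel_right, smul_eq_mul]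
  have hsq : (∫ x in 0..L, (vt x 0 - c * vx x 0) ^ 2) + ∫ x in 0..L, (vt x 0 + c * vx x 0) ^ 2
      = 2 * ∫ x in 0..L, (vt x 0 ^ 2 + c ^ 2 * vx x 0 ^ 2) := by
    have hA : ContinuousOn (fun x => (vt x 0 - c * vx x 0) ^ 2) (Icc 0 L) := by fun_prop
    have hB : ContinuousOn (fun x => (vt x 0 + c * vx x 0) ^ 2) (Icc 0 L) := by fun_prop
    rw [← intervalIntegral.integral_add (hA.intervalIntegrable_of_Icc hL.le)
      (hB.intervalIntegrable_of_Icc hL.le),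
      ← intervalIntegral.integral_const_mul]
    exact intervalIntegral.integral_congr fun x _ => by ring
  rw [← intervalIntegral.integral_add_adjacent_intervals
    ((hvtL.mono (Icc_subset_Icc le_rfl (hLc2.trans hLT))).intervalIntegrable_of_Icc hLc.le)
    ((hvtL.mono (Icc_subset_Icc hLc.le hLT)).intervalIntegrable_of_Icc hLc2), hA, hB,
    ← mul_add, hsq]
  ring

end IsWaveSolution

/-- boundary observability inequality for the control-free wave
equation: for T > 2L/c there is C > 0 (depending only on T, L, c) with
∫₀ᵀ |v_t(L,t)|² dt ≥ C·E(0) for all C² solutions. -/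
theorem wave_observability (L c T : ℝ) (hL : 0 < L) (hc : 0 < c)
    (hT : 2*L/c < T) :
    ∃ C > (0:ℝ), ∀ v vx vt vxx vtt : ℝ → ℝ → ℝ,
      (∀ x ∈ Icc (0:ℝ) L, ∀ t ∈ Icc (0:ℝ) T,
        HasDerivWithinAt (fun y => v y t) (vx x t) (Icc 0 L) x) →
      (∀ x ∈ Icc (0:ℝ) L, ∀ t ∈ Icc (0:ℝ) T,
        HasDerivWithinAt (fun y => vx y t) (vxx x t) (Icc 0 L) x) →
      (∀ x ∈ Icc (0:ℝ) L, ∀ t ∈ Icc (0:ℝ) T,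
        HasDerivWithinAt (fun s => v x s) (vt x t) (Icc 0 T) t) →
      (∀ x ∈ Icc (0:ℝ) L, ∀ t ∈ Icc (0:ℝ) T,
        HasDerivWithinAt (fun s => vt x s) (vtt x t) (Icc 0 T) t) →
      (ContinuousOn (fun p : ℝ × ℝ => v p.1 p.2) (Icc 0 L ×ˢ Icc 0 T) ∧
        ContinuousOn (fun p : ℝ × ℝ => vx p.1 p.2) (Icc 0 L ×ˢ Icc 0 T) ∧
        ContinuousOn (fun p : ℝ × ℝ => vt p.1 p.2) (Icc 0 L ×ˢ Icc 0 T) ∧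
        ContinuousOn (fun p : ℝ × ℝ => vxx p.1 p.2) (Icc 0 L ×ˢ Icc 0 T) ∧
        ContinuousOn (fun p : ℝ × ℝ => vtt p.1 p.2) (Icc 0 L ×ˢ Icc 0 T)) →
      (∀ x ∈ Ioo (0:ℝ) L, ∀ t ∈ Ioo (0:ℝ) T, vtt x t = c^2 * vxx x t) →
      (∀ t ∈ Icc (0:ℝ) T, v 0 t = 0) →
      (∀ t ∈ Icc (0:ℝ) T, vx L t = 0) →
      C * ((1/2) * ∫ x in (0:ℝ)..L, ((vt x 0)^2 + c^2 * (vx x 0)^2)) ≤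
        ∫ t in (0:ℝ)..T, (vt L t)^2 := by
  refine ⟨4 / c, by positivity, ?_⟩
  rintro v vx vt vxx vtt hvx hvxx hvt hvtt ⟨-, hcvx, hcvt, hcvxx, hcvtt⟩ hpde hdir hneu
  have hT0 : 0 < T := (by positivity : (0 : ℝ) < 2 * L / c).trans hT
  have hwave : EqOn (uncurry vtt) (fun p => c ^ 2 * vxx p.1 p.2) (Icc 0 L ×ˢ Icc 0 T) :=
    EqOn.of_subset_closure (fun p hp => hpde p.1 hp.1 p.2 hp.2) hcvtt (continuousOn_const.mul hcvxx)
      (prod_mono Ioo_subset_Icc_self Ioo_subset_Icc_self)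
      (by rw [closure_prod_eq, closure_Ioo hL.ne, closure_Ioo hT0.ne])
  have hv : IsWaveSolution c L T v vx vt vxx vtt := ⟨hvx, hvxx, hvt, hvtt, hcvx, hcvt, hcvxx,
    fun x hx t ht => hwave (mk_mem_prod hx ht), hdir, hneu⟩
  calc 4 / c * ((1 / 2) * ∫ x in (0:ℝ)..L, ((vt x 0) ^ 2 + c ^ 2 * (vx x 0) ^ 2))
      = ∫ t in (0:ℝ)..2 * L / c, (vt L t) ^ 2 := by
        rw [hv.integral_sq_vt_right_end hL hc hT.le]; ring
    _ ≤ ∫ t in (0:ℝ)..T, (vt L t) ^ 2 :=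
        intervalIntegral.integral_mono_interval le_rfl (by positivity) hT.le
          (ae_of_all _ fun _ => sq_nonneg _)
          ((hv.continuousOn_vt.uncurry_left L (right_mem_Icc.2 hL.le)).pow 2
            |>.intervalIntegrable_of_Icc hT0.le)
end

section
/- Let c, h > 0 and N ≥ 1. Let A_h^{FEM} be the (N+1)×(N+1) real matrix equal to (c²/h²) times the tridiagonal matrix with all diagonal entries 2 except the last diagonal entry 1, and all sub- and super-diagonal entries −1, and let K = diag(2, 2, …, 2, 1) be the (N+1)×(N+1) diagonal matrix with all diagonal entries 2 except the last entry 1. Then for each j = 1, …, N+1, the number λ_j = (2c²/h²)·sin²( (2j−1)π / (4(N+1)) ) is an eigenvalue of K⁻¹A_h^{FEM} with eigenvector u_j whose k-th component is u_{j,k} = sin( (2j−1)kπ / (2(N+1)) ), k = 1, …, N+1; these are all the eigenvalues of K⁻¹A_h^{FEM}. -/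
open Matrix

/-- The matrix (c²/h²) × tridiag(−1, 2, −1) of size n, with last diagonal entry 1
instead of 2. -/
noncomputable def stiffFEM (c h : ℝ) (n : ℕ) : Matrix (Fin n) (Fin n) ℝ :=
  Matrix.of fun i j =>
    (c^2/h^2) * (if i = j then (if (i:ℕ) = n - 1 then 1 else 2)
      else if (i:ℕ)+1 = (j:ℕ) ∨ (j:ℕ)+1 = (i:ℕ) then -1 else 0)

/-- The diagonal matrix K = diag(2,…,2,1) of size n. -/
def Kdiag (n : ℕ) : Matrix (Fin n) (Fin n) ℝ :=
  Matrix.of fun i j => if i = j then (if (i:ℕ) = n - 1 then 1 else 2) else 0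

open Real

/-!
The modes are discrete sines `u k = sin (k α)` with `cos ((N + 1) α) = 0`. Extended past the
mesh they vanish at `k = 0` and are symmetric about `k = N + 1`, so `K⁻¹ A` acts on them as the
interior second difference `c² / (2h²) · (2 u k - u (k - 1) - u (k + 1))`, which multiplies
`sin (k α)` by `4 sin² (α / 2)`. The `N + 1` eigenvalues are strictly increasing in `j`
(`sin²` increases on `(0, π / 2)`), and eigenvectors for distinct eigenvalues are independent,
so in dimension `N + 1` no other eigenvalue fits.
-/

theorem Module.End.mem_range_of_hasEigenvalue_of_finrank_le {K V ι : Type*} [Field K]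
    [AddCommGroup V] [Module K V] [FiniteDimensional K V] [Fintype ι] {f : Module.End K V}
    {eval : ι → K} (h_inj : Function.Injective eval) (h_eval : ∀ i, f.HasEigenvalue (eval i))
    (h_card : Module.finrank K V ≤ Fintype.card ι) {μ : K} (hμ : f.HasEigenvalue μ) :
    μ ∈ Set.range eval := by
  by_contra hμ_new
  let eval' : Option ι → K := fun o => o.elim μ eval
  have h_inj' : Function.Injective eval' := by
    rintro (_ | i) (_ | j) hij
    · rfl
    · exact absurd ⟨j, hij.symm⟩ hμ_new
    · exact absurd ⟨i, hij⟩ hμ_new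
    · exact congrArg some (h_inj hij)
  have h_eval' : ∀ o, f.HasEigenvalue (eval' o) := by
    rintro (_ | i)
    exacts [hμ, h_eval i]
  have h_indep := f.eigenvectors_linearIndependent' eval' h_inj'
    (fun o => (h_eval' o).exists_hasEigenvector.choose)
    (fun o => (h_eval' o).exists_hasEigenvector.choose_spec)
  have := h_indep.fintype_card_le_finrank
  rw [Fintype.card_option] at this
  omega

theorem Matrix.hasEigenvalue_toLin'_of_mulVec_eq_smul {K n : Type*} [CommRing K] [Fintype n]
    [DecidableEq n] {M : Matrix n n K} {μ : K} {w : n → K} (hw : w ≠ 0) (h : M *ᵥ w = μ • w) :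
    Module.End.HasEigenvalue (toLin' M) μ :=
  Module.End.hasEigenvalue_of_hasEigenvector
    ⟨Module.End.mem_eigenspace_iff.mpr (by rwa [toLin'_apply]), hw⟩

theorem Matrix.hasEigenvalue_toLin'_map_ofReal {n : Type*} [Fintype n] [DecidableEq n]
    {M : Matrix n n ℝ} {r : ℝ} {v : n → ℝ} (hv : v ≠ 0) (h : M *ᵥ v = r • v) :
    Module.End.HasEigenvalue (toLin' (M.map ((↑) : ℝ → ℂ))) r := by
  refine hasEigenvalue_toLin'_of_mulVec_eq_smul (w := fun k => (v k : ℂ)) ?_ ?_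
  · contrapose! hv
    funext k
    exact Complex.ofReal_eq_zero.mp (congrFun hv k)
  · funext k
    have := RingHom.map_mulVec Complex.ofRealHom M v k
    simp only [h, Pi.smul_apply, smul_eq_mul, map_mul, Complex.ofRealHom_eq_coe,
      Function.comp_def] at this
    rw [Pi.smul_apply, smul_eq_mul]
    exact this.symm

theorem Kdiag_eq_diagonal (n : ℕ) :
    Kdiag n = diagonal fun i : Fin n => if (i : ℕ) = n - 1 then 1 else 2 := by
  ext i j
  rcases eq_or_ne i j with rfl | hij
  · simp [Kdiag]
  · simp [Kdiag, hij]

theorem Kdiag_inv (n : ℕ) :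
    (Kdiag n)⁻¹ = diagonal fun i : Fin n => (if (i : ℕ) = n - 1 then 1 else 2)⁻¹ := by
  rw [Kdiag_eq_diagonal]
  refine inv_eq_right_inv ?_
  rw [diagonal_mul_diagonal, ← diagonal_one]
  congr 1
  funext i
  split_ifs <;> norm_num

theorem Finset.sum_range_ite_eq_succ {M : Type*} [AddCommMonoid M] {n i : ℕ} (hi : i ≤ n + 1)
    (u : ℕ → M) (hu : u 0 = 0) :
    ∑ k ∈ Finset.range (n + 1), (if i = k + 1 then u (k + 1) else 0) = u i := by
  have := Finset.sum_range_succ' (fun k => if i = k then u k else 0) (n + 1)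
  simp only [Finset.sum_ite_eq, Finset.mem_range, hu, ite_self, add_zero] at this
  rw [← this, if_pos (by omega)]

theorem stiffFEM_mulVec_apply {n : ℕ} (c h : ℝ) (u : ℕ → ℝ) (hu : u 0 = 0) (i : Fin (n + 1)) :
    (stiffFEM c h (n + 1) *ᵥ fun k => u (k + 1)) i =
      c ^ 2 / h ^ 2 * if (i : ℕ) = n then u (i + 1) - u i else 2 * u (i + 1) - u i - u (i + 2) := by
  set d : ℝ := if (i : ℕ) = n then 1 else 2
  have hrow : ∀ k : ℕ, c ^ 2 / h ^ 2 * (if (i : ℕ) = k then d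
      else if (i : ℕ) + 1 = k ∨ k + 1 = (i : ℕ) then -1 else 0) * u (k + 1) =
      c ^ 2 / h ^ 2 * ((if (i : ℕ) = k then d * u (k + 1) else 0)
        - (if (i : ℕ) + 1 = k then u (k + 1) else 0)
        - (if (i : ℕ) = k + 1 then u (k + 1) else 0)) := by
    intro k
    split_ifs <;> first | omega | ring1
  simp only [mulVec, dotProduct, stiffFEM, of_apply, Fin.ext_iff, Nat.add_sub_cancel]
  rw [Fin.sum_univ_eq_sum_range (fun k => c ^ 2 / h ^ 2 * (if (i : ℕ) = k then d
      else if (i : ℕ) + 1 = k ∨ k + 1 = (i : ℕ) then -1 else 0) * u (k + 1))]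
  simp only [hrow, ← Finset.mul_sum, Finset.sum_sub_distrib, Finset.sum_ite_eq, Finset.mem_range,
    Finset.sum_range_ite_eq_succ (Nat.le_succ_of_le i.is_le) u hu, if_pos i.isLt]
  by_cases hi : (i : ℕ) = n
  · rw [if_neg (by omega)]
    simp only [d, hi, if_true]
    ring
  · rw [if_pos (by omega)]
    simp only [d, hi, if_false]
    ring

/-- `u 0 = 0` is the clamped end and `u (n + 2) = u n` a ghost node mirroring the free end;
with them every row of `K⁻¹ A`, the halved last one included, is the interior second
difference. -/
theorem Kdiag_inv_mul_stiffFEM_mulVec {n : ℕ} (c h : ℝ) (u : ℕ → ℝ) (hu₀ : u 0 = 0)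
    (hu : u (n + 2) = u n) :
    ((Kdiag (n + 1))⁻¹ * stiffFEM c h (n + 1)) *ᵥ (fun k => u (k + 1)) =
      fun k : Fin (n + 1) => c ^ 2 / (2 * h ^ 2) * (2 * u (k + 1) - u k - u (k + 2)) := by
  funext i
  rw [← mulVec_mulVec, Kdiag_inv, mulVec_diagonal, stiffFEM_mulVec_apply c h u hu₀,
    Nat.add_sub_cancel]
  by_cases hi : (i : ℕ) = n
  · simp only [hi, if_true, hu]
    field_simp
    ring
  · simp only [hi, if_false]
    field_simp

theorem two_mul_sin_sub_sin_sub_sin (x α : ℝ) :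
    2 * sin x - sin (x - α) - sin (x + α) = 4 * sin (α / 2) ^ 2 * sin x := by
  have hcos : cos α = 1 - 2 * sin (α / 2) ^ 2 := by
    conv_lhs => rw [show α = 2 * (α / 2) by ring, cos_two_mul, cos_sq']
    ring
  rw [sin_sub, sin_add, hcos]
  ring

theorem Kdiag_inv_mul_stiffFEM_mulVec_sin {n : ℕ} (c h α : ℝ) (hα : cos ((n + 1) * α) = 0) :
    ((Kdiag (n + 1))⁻¹ * stiffFEM c h (n + 1)) *ᵥ (fun k : Fin (n + 1) => sin ((k + 1) * α)) =
      (2 * c ^ 2 / h ^ 2 * sin (α / 2) ^ 2) • fun k : Fin (n + 1) => sin ((k + 1) * α) := by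
  have hrefl : sin ((n + 2) * α) = sin (n * α) := by
    have h₁ : (n + 2) * α = (n + 1) * α + α := by ring
    have h₂ : n * α = (n + 1) * α - α := by ring
    rw [h₁, h₂, sin_add, sin_sub, hα]
    ring
  have := Kdiag_inv_mul_stiffFEM_mulVec (n := n) c h (fun m => sin (m * α))
    (by simp) (by push_cast; exact hrefl)
  push_cast at this
  rw [this]
  funext k
  have := two_mul_sin_sub_sin_sub_sin ((k + 1) * α) α
  rw [show (k : ℝ) * α = (k + 1) * α - α by ring, show ((k : ℝ) + 2) * α = (k + 1) * α + α by ring]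
  simp only [Pi.smul_apply, smul_eq_mul]
  linear_combination c ^ 2 / (2 * h ^ 2) * this

theorem modeAngle_mem_Ioo {N j : ℕ} (hj : j ≤ N) :
    (2 * (j : ℝ) + 1) * π / (4 * ((N : ℝ) + 1)) ∈ Set.Ioo 0 (π / 2) := by
  have hjN : (j : ℝ) ≤ N := by exact_mod_cast hj
  constructor
  · positivity
  · rw [div_lt_div_iff₀ (by positivity) two_pos]
    nlinarith [pi_pos]

theorem Kdiag_inv_mul_stiffFEM_mulVec_mode (c h : ℝ) (N j : ℕ) :
    ((Kdiag (N + 1))⁻¹ * stiffFEM c h (N + 1)) *ᵥ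
        (fun k : Fin (N + 1) => sin ((2 * (j : ℝ) + 1) * ((k : ℝ) + 1) * π / (2 * ((N : ℝ) + 1))))
      = (2 * c ^ 2 / h ^ 2 * sin ((2 * (j : ℝ) + 1) * π / (4 * ((N : ℝ) + 1))) ^ 2) •
        fun k : Fin (N + 1) =>
          sin ((2 * (j : ℝ) + 1) * ((k : ℝ) + 1) * π / (2 * ((N : ℝ) + 1))) := by
  have hcos : cos ((N + 1) * ((2 * j + 1) * π / (2 * (N + 1)))) = 0 :=
    cos_eq_zero_iff.mpr ⟨j, by field_simp; push_cast; ring⟩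
  have hmode : (fun k : Fin (N + 1) => sin ((2 * (j : ℝ) + 1) * ((k : ℝ) + 1) * π / (2 * (N + 1))))
      = fun k : Fin (N + 1) => sin ((k + 1) * ((2 * j + 1) * π / (2 * (N + 1)))) := by
    funext k
    ring_nf
  have hhalf : (2 * (j : ℝ) + 1) * π / (4 * (N + 1)) = (2 * j + 1) * π / (2 * (N + 1)) / 2 := by
    field_simp
    ring
  rw [hmode, hhalf]
  exact Kdiag_inv_mul_stiffFEM_mulVec_sin c h _ hcos

theorem mode_ne_zero {N j : ℕ} (hj : j ≤ N) :
    (fun k : Fin (N + 1) => sin ((2 * (j : ℝ) + 1) * ((k : ℝ) + 1) * π / (2 * ((N : ℝ) + 1))))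
      ≠ 0 := by
  intro h0
  obtain ⟨hθ₀, hθ⟩ := modeAngle_mem_Ioo hj
  have hpos : 0 < sin ((2 * (j : ℝ) + 1) * ((0 : ℕ) + 1) * π / (2 * ((N : ℝ) + 1))) := by
    have : (2 * (j : ℝ) + 1) * ((0 : ℕ) + 1) * π / (2 * ((N : ℝ) + 1))
        = 2 * ((2 * (j : ℝ) + 1) * π / (4 * ((N : ℝ) + 1))) := by
      push_cast
      field_simp
      ring
    rw [this]
    exact sin_pos_of_pos_of_lt_pi (by positivity) (by linarith)
  exact hpos.ne' (by simpa using congrFun h0 0)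

theorem strictMono_modeEigenvalue {c h : ℝ} (hc : 0 < c) (hh : 0 < h) (N : ℕ) :
    StrictMono fun j : Fin (N + 1) =>
      2 * c ^ 2 / h ^ 2 * sin ((2 * ((j : ℕ) : ℝ) + 1) * π / (4 * ((N : ℝ) + 1))) ^ 2 := by
  intro j j' hjj'
  obtain ⟨hθ₀, hθ⟩ := modeAngle_mem_Ioo (Nat.le_of_lt_succ j.isLt)
  obtain ⟨hθ₀', hθ'⟩ := modeAngle_mem_Ioo (Nat.le_of_lt_succ j'.isLt)
  have hlt : (2 * ((j : ℕ) : ℝ) + 1) * π / (4 * ((N : ℝ) + 1))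
      < (2 * ((j' : ℕ) : ℝ) + 1) * π / (4 * ((N : ℝ) + 1)) := by
    have : ((j : ℕ) : ℝ) < (j' : ℕ) := by exact_mod_cast hjj'
    gcongr
  have hsin := strictMonoOn_sin ⟨by linarith, hθ.le⟩ ⟨by linarith, hθ'.le⟩ hlt
  have hsin₀ := sin_nonneg_of_nonneg_of_le_pi hθ₀.le (by linarith)
  dsimp only
  gcongr

/-- `j : Fin (N+1)` stands for the paper's index `j.val + 1`, and likewise `k`. -/
theorem KinvStiff_eigenpairs_general (c h : ℝ) (hc : 0 < c) (hh : 0 < h) (N : ℕ) :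
    (∀ j : Fin (N+1),
      (fun k : Fin (N+1) =>
        Real.sin ((2*((j:ℕ):ℝ)+1) * (((k:ℕ):ℝ)+1) * Real.pi / (2*((N:ℝ)+1)))) ≠ 0 ∧
      ((Kdiag (N+1))⁻¹ * stiffFEM c h (N+1)).mulVec
        (fun k : Fin (N+1) =>
          Real.sin ((2*((j:ℕ):ℝ)+1) * (((k:ℕ):ℝ)+1) * Real.pi / (2*((N:ℝ)+1))))
      = ((2*c^2/h^2) * Real.sin ((2*((j:ℕ):ℝ)+1) * Real.pi / (4*((N:ℝ)+1)))^2) •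
        (fun k : Fin (N+1) =>
          Real.sin ((2*((j:ℕ):ℝ)+1) * (((k:ℕ):ℝ)+1) * Real.pi / (2*((N:ℝ)+1))))) ∧
    (∀ μ : ℂ, (∃ w : Fin (N+1) → ℂ, w ≠ 0 ∧
        (((Kdiag (N+1))⁻¹ * stiffFEM c h (N+1)).map (fun x => (x:ℂ))).mulVec w = μ • w) →
      ∃ j : Fin (N+1),
        μ = (((2*c^2/h^2) * Real.sin ((2*((j:ℕ):ℝ)+1) * Real.pi / (4*((N:ℝ)+1)))^2 : ℝ) : ℂ)) := by
  have h_mode (j : Fin (N + 1)) := mode_ne_zero (Nat.le_of_lt_succ j.isLt)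
  refine ⟨fun j => ⟨h_mode j, Kdiag_inv_mul_stiffFEM_mulVec_mode c h N j⟩, ?_⟩
  rintro μ ⟨w, hw, hμ⟩
  obtain ⟨j, hj⟩ := Module.End.mem_range_of_hasEigenvalue_of_finrank_le
    (Complex.ofReal_injective.comp (strictMono_modeEigenvalue hc hh N).injective)
    (fun j => hasEigenvalue_toLin'_map_ofReal (h_mode j)
      (Kdiag_inv_mul_stiffFEM_mulVec_mode c h N j))
    (by simp) (hasEigenvalue_toLin'_of_mulVec_eq_smul hw hμ)
  exact ⟨j, hj.symm⟩

/-- the eigen-pairs of K⁻¹A_h^{FEM}: for j = 1,…,N+1 (encoded as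
j : Fin (N+1), so "j" is j.val+1), λ_j = (2c²/h²)·sin²((2j−1)π/(4(N+1))) with
eigenvector u_{j,k} = sin((2j−1)kπ/(2(N+1))), k = 1,…,N+1, and these are all
the eigenvalues of K⁻¹A_h^{FEM}. -/
theorem KinvStiff_eigenpairs (c h : ℝ) (hc : 0 < c) (hh : 0 < h) (N : ℕ) (hN : 1 ≤ N) :
    (∀ j : Fin (N+1),
      (fun k : Fin (N+1) =>
        Real.sin ((2*((j:ℕ):ℝ)+1) * (((k:ℕ):ℝ)+1) * Real.pi / (2*((N:ℝ)+1)))) ≠ 0 ∧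
      ((Kdiag (N+1))⁻¹ * stiffFEM c h (N+1)).mulVec
        (fun k : Fin (N+1) =>
          Real.sin ((2*((j:ℕ):ℝ)+1) * (((k:ℕ):ℝ)+1) * Real.pi / (2*((N:ℝ)+1))))
      = ((2*c^2/h^2) * Real.sin ((2*((j:ℕ):ℝ)+1) * Real.pi / (4*((N:ℝ)+1)))^2) •
        (fun k : Fin (N+1) =>
          Real.sin ((2*((j:ℕ):ℝ)+1) * (((k:ℕ):ℝ)+1) * Real.pi / (2*((N:ℝ)+1))))) ∧
    (∀ μ : ℂ, (∃ w : Fin (N+1) → ℂ, w ≠ 0 ∧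
        (((Kdiag (N+1))⁻¹ * stiffFEM c h (N+1)).map (fun x => (x:ℂ))).mulVec w = μ • w) →
      ∃ j : Fin (N+1),
        μ = (((2*c^2/h^2) * Real.sin ((2*((j:ℕ):ℝ)+1) * Real.pi / (4*((N:ℝ)+1)))^2 : ℝ) : ℂ)) :=
  KinvStiff_eigenpairs_general c h hc hh N
end

section
/- Let c, h > 0 and N ≥ 1. Let A_h^{FEM} be the (N+1)×(N+1) real matrix equal to (c²/h²) times the tridiagonal matrix with all diagonal entries 2 except the last diagonal entry 1, and all sub- and super-diagonal entries −1, and let M be the (N+1)×(N+1) tridiagonal matrix with all diagonal entries 2/3 except the last diagonal entry 1/3, and all sub- and super-diagonal entries 1/6. Then M is invertible, and the eigenvalues of M⁻¹A_h^{FEM} are exactly the N+1 numbers λ_j = (c²/h²)·( 6 − 6 cos θ_j ) / ( 2 + cos θ_j ), where θ_j = (2j−1)π / (2(N+1)), j = 1, …, N+1. -/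
open Matrix

/-- The tridiagonal mass matrix of size n: diagonal 2/3 except last entry 1/3,
off-diagonal entries 1/6. -/
noncomputable def massFEM (n : ℕ) : Matrix (Fin n) (Fin n) ℝ :=
  Matrix.of fun i j =>
    if i = j then (if (i:ℕ) = n - 1 then 1/3 else 2/3)
    else if (i:ℕ)+1 = (j:ℕ) ∨ (j:ℕ)+1 = (i:ℕ) then 1/6 else 0

/-!
Both matrices are instances of `tridiagHalfLast n d e`: diagonal `d` with last entry `d / 2`,
off-diagonal `e`. If `cos (n θ) = 0`, the sine vector `s k = sin ((k + 1) θ)` satisfies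
`T_{d,e} s = (d + 2 e cos θ) • T_{1,0} s`: interior rows are the identity
`sin (k θ) + sin ((k + 2) θ) = 2 cos θ sin ((k + 1) θ)`, the first row uses `sin 0 = 0`,
and the halved last row uses the reflection `sin ((n + 1) θ) = sin ((n - 1) θ)`.
Hence `A s = λ • M s` with `λ = (c²/h²) (2 - 2 cos θ) / ((2 + cos θ) / 3)`.
The `N + 1` angles `θ_j ∈ (0, π)` give distinct `λ_j`, so they exhaust the roots of the
characteristic polynomial of `M⁻¹ A`. The mass matrix is invertible by strict diagonal dominance.
-/

open Real

open Polynomial in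
lemma Polynomial.exists_eq_of_isRoot_of_injective {K : Type*} [Field K] {p : K[X]} (hp : p ≠ 0)
    {n : ℕ} (hdeg : p.natDegree ≤ n) {r : Fin n → K} (hr : Function.Injective r)
    (hroots : ∀ j, p.IsRoot (r j)) {μ : K} (hμ : p.IsRoot μ) : ∃ j, r j = μ := by
  classical
  by_contra! hne
  have hsub : (insert μ (Finset.univ.image r)).val ⊆ p.roots := by
    intro x hx
    rw [Finset.mem_val, Finset.mem_insert, Finset.mem_image] at hx
    rw [mem_roots hp]
    rcases hx with rfl | ⟨j, -, rfl⟩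
    exacts [hμ, hroots j]
  have hcard := card_le_degree_of_subset_roots hsub
  rw [Finset.card_insert_of_notMem (by simpa using fun j => hne j),
    Finset.card_image_of_injective _ hr, Finset.card_univ, Fintype.card_fin] at hcard
  omega

lemma Matrix.exists_mulVec_eq_smul_iff_isRoot_charpoly {n K : Type*} [Fintype n] [DecidableEq n]
    [Field K] (B : Matrix n n K) (μ : K) :
    (∃ v ≠ 0, B *ᵥ v = μ • v) ↔ B.charpoly.IsRoot μ := by
  rw [← mem_spectrum_iff_isRoot_charpoly, spectrum.mem_iff, isUnit_iff_isUnit_det,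
    isUnit_iff_ne_zero, not_not, ← exists_mulVec_eq_zero_iff]
  simp only [Algebra.algebraMap_eq_smul_one, sub_mulVec, smul_mulVec, one_mulVec, sub_eq_zero,
    eq_comm]

lemma Matrix.exists_mulVec_eq_smul_iff_of_injective {n : ℕ} {K : Type*} [Field K]
    (B : Matrix (Fin n) (Fin n) K) {r : Fin n → K} (hr : Function.Injective r)
    (heig : ∀ j, ∃ v ≠ 0, B *ᵥ v = r j • v) (μ : K) :
    (∃ v ≠ 0, B *ᵥ v = μ • v) ↔ ∃ j, μ = r j := by
  simp only [exists_mulVec_eq_smul_iff_isRoot_charpoly] at heig ⊢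
  refine ⟨fun hμ => ?_, fun ⟨j, hj⟩ => hj ▸ heig j⟩
  obtain ⟨j, hj⟩ := Polynomial.exists_eq_of_isRoot_of_injective B.charpoly_monic.ne_zero
    (by simp [charpoly_natDegree_eq_dim]) hr heig hμ
  exact ⟨j, hj.symm⟩

lemma Matrix.mulVec_eq_smul_of_mulVec_eq_smul_mulVec {n R : Type*} [Fintype n] [DecidableEq n]
    [CommRing R] {A M : Matrix n n R} (hM : IsUnit M.det) {v : n → R} {r : R}
    (h : A *ᵥ v = r • M *ᵥ v) : (M⁻¹ * A) *ᵥ v = r • v := by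
  rw [← mulVec_mulVec, h, mulVec_smul, mulVec_mulVec, nonsing_inv_mul _ hM, one_mulVec]

lemma Matrix.map_ofReal_mulVec_eq_smul {n : Type*} [Fintype n] {B : Matrix n n ℝ} {v : n → ℝ}
    {r : ℝ} (h : B *ᵥ v = r • v) :
    B.map (fun x => (x : ℂ)) *ᵥ (fun k => (v k : ℂ)) =
      (r : ℂ) • fun k => (v k : ℂ) := by
  ext i
  exact (RingHom.map_mulVec Complex.ofRealHom B v i).symm.trans (by simp [h])

noncomputable def tridiagHalfLast (n : ℕ) (d e : ℝ) : Matrix (Fin n) (Fin n) ℝ :=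
  of fun i j => if i = j then (if (i:ℕ) = n - 1 then d / 2 else d)
    else if (i:ℕ) + 1 = (j:ℕ) ∨ (j:ℕ) + 1 = (i:ℕ) then e else 0

lemma Fin.sum_ite_val_eq {M : Type*} [AddCommMonoid M] (n m : ℕ) (f : ℕ → M) :
    ∑ k : Fin n, (if (k:ℕ) = m then f k else 0) = if m < n then f m else 0 := by
  simp [Fin.sum_univ_eq_sum_range (fun k => if k = m then f k else 0)]

/-- Reading the vector off `g : ℤ → ℝ` with `g (-1) = 0` makes the first row an instance of
the interior formula. -/
lemma tridiagHalfLast_mulVec_apply {n : ℕ} (d e : ℝ) {g : ℤ → ℝ} (hg : g (-1) = 0)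
    (i : Fin n) :
    (tridiagHalfLast n d e *ᵥ fun k => g (k : ℕ)) i =
      if (i:ℕ) = n - 1 then d / 2 * g i + e * g (i - 1)
      else d * g i + e * (g (i - 1) + g (i + 1)) := by
  have hsplit : ∀ k, tridiagHalfLast n d e i k * g (k : ℕ) =
      (if k = i then (if (i:ℕ) = n - 1 then d / 2 else d) * g i else 0) +
      (if (k:ℕ) = i + 1 then e * g (k : ℕ) else 0) +
      (if (k:ℕ) + 1 = i then e * g (k : ℕ) else 0) := by
    intro k
    simp only [tridiagHalfLast, of_apply, Fin.ext_iff]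
    split_ifs <;> first | omega | simp_all
  have hprev : ∑ k : Fin n, (if (k:ℕ) + 1 = i then e * g (k : ℕ) else 0) = e * g (i - 1) := by
    obtain ⟨i, hi⟩ := i
    cases i with
    | zero => simp [hg]
    | succ m =>
      simp only [Nat.add_right_cancel_iff]
      rw [Fin.sum_ite_val_eq n m (fun k => e * g k), if_pos (by omega)]
      push_cast
      ring_nf
  simp only [mulVec, dotProduct, hsplit, Finset.sum_add_distrib, Finset.sum_ite_eq',
    Finset.mem_univ, if_true, hprev]
  rw [Fin.sum_ite_val_eq n _ (fun k => e * g k)]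
  split_ifs <;> first | omega | (push_cast; ring)

lemma tridiagHalfLast_det_ne_zero {n : ℕ} {d e : ℝ} (h : 2 * |e| < |d|) :
    (tridiagHalfLast n d e).det ≠ 0 := by
  refine det_ne_zero_of_sum_row_lt_diag fun i => ?_
  let g : ℤ → ℝ := fun k => if 0 ≤ k then 1 else 0
  have hg : ∀ k, g k ≤ 1 := fun k => by simp only [g]; split_ifs <;> norm_num
  have hoff : ∑ j ∈ Finset.univ.erase i, ‖tridiagHalfLast n d e i j‖ =
      (tridiagHalfLast n 0 |e| *ᵥ fun k => g (k : ℕ)) i := by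
    have hdiag : tridiagHalfLast n 0 |e| i i = 0 := by simp [tridiagHalfLast]
    simp only [mulVec, dotProduct, g, Nat.cast_nonneg, if_true, mul_one,
      ← Finset.sum_erase Finset.univ hdiag]
    refine Finset.sum_congr rfl fun j hj => ?_
    simp only [tridiagHalfLast, of_apply, if_neg (Finset.ne_of_mem_erase hj).symm]
    split_ifs <;> simp
  rw [hoff, tridiagHalfLast_mulVec_apply 0 |e| (by simp [g]) i]
  simp only [tridiagHalfLast, of_apply, if_true, Real.norm_eq_abs]
  have he := abs_nonneg e
  split_ifs
  · rw [abs_div]; nlinarith [hg (i - 1)]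
  · nlinarith [hg (i - 1), hg (i + 1)]

lemma tridiagHalfLast_mulVec_sin {n : ℕ} (d e : ℝ) {θ : ℝ} (hθ : cos (n * θ) = 0) :
    (tridiagHalfLast n d e *ᵥ fun k => sin (((k : ℕ) + 1) * θ)) =
      (d + 2 * e * cos θ) • tridiagHalfLast n 1 0 *ᵥ fun k => sin (((k : ℕ) + 1) * θ) := by
  set g : ℤ → ℝ := fun z => sin ((z + 1) * θ)
  have hg : g (-1) = 0 := by simp [g]
  have hs : (fun k : Fin n => sin (((k : ℕ) + 1) * θ)) = fun k : Fin n => g (k : ℕ) := by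
    funext k; simp [g]
  ext i
  rw [hs, Pi.smul_apply, tridiagHalfLast_mulVec_apply d e hg,
    tridiagHalfLast_mulVec_apply 1 0 hg]
  set x : ℝ := ((i : ℕ) : ℝ)
  have hprev : g (i - 1) = sin ((x + 1) * θ) * cos θ - cos ((x + 1) * θ) * sin θ := by
    rw [← sin_sub]; simp only [g, x]; push_cast; congr 1; ring
  have hnext : g (i + 1) = sin ((x + 1) * θ) * cos θ + cos ((x + 1) * θ) * sin θ := by
    rw [← sin_add]; simp only [g, x]; push_cast; congr 1; ring
  have hcur : g i = sin ((x + 1) * θ) := by simp [g, x]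
  rw [hprev, hnext, hcur]
  split_ifs with hi
  · have hx : x + 1 = n := by simp only [x]; norm_cast; omega
    rw [hx, hθ]; simp only [← hx]; ring
  · ring

lemma stiffFEM_eq (c h : ℝ) (n : ℕ) :
    stiffFEM c h n = (c^2/h^2) • tridiagHalfLast n 2 (-1) := by
  ext i j
  simp only [stiffFEM, tridiagHalfLast, of_apply, Matrix.smul_apply, smul_eq_mul]
  norm_num

lemma massFEM_eq (n : ℕ) : massFEM n = tridiagHalfLast n (2/3) (1/6) := by
  ext i j
  simp only [massFEM, tridiagHalfLast, of_apply]
  norm_num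

noncomputable def femEigenvalue (c h θ : ℝ) : ℝ := (c^2/h^2) * (6 - 6 * cos θ) / (2 + cos θ)

noncomputable def femAngle (N : ℕ) (j : Fin (N + 1)) : ℝ :=
  (2 * ((j : ℕ) : ℝ) + 1) * π / (2 * ((N : ℝ) + 1))

lemma massFEM_det_ne_zero (n : ℕ) : (massFEM n).det ≠ 0 := by
  rw [massFEM_eq]
  exact tridiagHalfLast_det_ne_zero (by norm_num [abs_of_pos])

lemma stiffFEM_mulVec_sin {n : ℕ} (c h : ℝ) {θ : ℝ} (hθ : cos (n * θ) = 0) :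
    (stiffFEM c h n *ᵥ fun k => sin (((k : ℕ) + 1) * θ)) =
      femEigenvalue c h θ • massFEM n *ᵥ fun k => sin (((k : ℕ) + 1) * θ) := by
  have hcos : 2 + cos θ ≠ 0 := by linarith [neg_one_le_cos θ]
  rw [stiffFEM_eq, massFEM_eq, smul_mulVec, tridiagHalfLast_mulVec_sin 2 (-1) hθ,
    tridiagHalfLast_mulVec_sin (2/3) (1/6) hθ, smul_smul, smul_smul, femEigenvalue]
  congr 1
  field_simp
  ring

lemma femAngle_mem_Ioo (N : ℕ) (j : Fin (N + 1)) : femAngle N j ∈ Set.Ioo 0 π := by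
  have hj : ((j : ℕ) : ℝ) + 1 ≤ N + 1 := by exact_mod_cast j.isLt
  constructor
  · unfold femAngle; positivity
  · rw [femAngle, div_lt_iff₀ (by positivity)]
    nlinarith [pi_pos]

lemma femAngle_injective (N : ℕ) : Function.Injective (femAngle N) := by
  intro a b hab
  simp only [femAngle] at hab
  field_simp at hab
  exact Fin.ext (by exact_mod_cast (by linarith : ((a : ℕ) : ℝ) = b))

lemma cos_mul_femAngle (N : ℕ) (j : Fin (N + 1)) : cos ((N + 1 : ℕ) * femAngle N j) = 0 := by
  rw [cos_eq_zero_iff]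
  exact ⟨j, by simp only [femAngle]; push_cast; field_simp⟩

lemma femEigenvalue_injOn {c h : ℝ} (hc : c ≠ 0) (hh : h ≠ 0) :
    Set.InjOn (femEigenvalue c h) (Set.Icc 0 π) := by
  intro x hx y hy hxy
  have hx2 : 2 + cos x ≠ 0 := by linarith [neg_one_le_cos x]
  have hy2 : 2 + cos y ≠ 0 := by linarith [neg_one_le_cos y]
  have hK : c^2/h^2 ≠ 0 := by positivity
  simp only [femEigenvalue] at hxy
  field_simp at hxy
  exact injOn_cos hx hy (by linarith)

lemma exists_ne_zero_mulVec_eq_femEigenvalue_smul (c h : ℝ) (N : ℕ) (j : Fin (N + 1)) :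
    ∃ v ≠ 0, ((massFEM (N+1))⁻¹ * stiffFEM c h (N+1)).map (fun x => (x:ℂ)) *ᵥ v =
      (femEigenvalue c h (femAngle N j) : ℂ) • v := by
  have hsin : sin (femAngle N j) ≠ 0 :=
    (sin_pos_of_pos_of_lt_pi (femAngle_mem_Ioo N j).1 (femAngle_mem_Ioo N j).2).ne'
  refine ⟨fun k => (sin (((k : ℕ) + 1) * femAngle N j) : ℂ), fun h0 => hsin ?_,
    map_ofReal_mulVec_eq_smul (mulVec_eq_smul_of_mulVec_eq_smul_mulVec
      (massFEM_det_ne_zero _).isUnit (stiffFEM_mulVec_sin c h (cos_mul_femAngle N j)))⟩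
  simpa only [Fin.val_zero, Nat.cast_zero, zero_add, one_mul, Pi.zero_apply,
    Complex.ofReal_eq_zero] using congrFun h0 0

theorem MinvStiff_eigenvalues_general (c h : ℝ) (hc : 0 < c) (hh : 0 < h) (N : ℕ) :
    IsUnit (massFEM (N+1)) ∧
    Function.Injective (fun j : Fin (N+1) =>
      (c^2/h^2) * (6 - 6*Real.cos ((2*((j:ℕ):ℝ)+1) * Real.pi / (2*((N:ℝ)+1)))) /
        (2 + Real.cos ((2*((j:ℕ):ℝ)+1) * Real.pi / (2*((N:ℝ)+1))))) ∧
    (∀ μ : ℂ, (∃ w : Fin (N+1) → ℂ, w ≠ 0 ∧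
        (((massFEM (N+1))⁻¹ * stiffFEM c h (N+1)).map (fun x => (x:ℂ))).mulVec w = μ • w) ↔
      ∃ j : Fin (N+1),
        μ = (((c^2/h^2) * (6 - 6*Real.cos ((2*((j:ℕ):ℝ)+1) * Real.pi / (2*((N:ℝ)+1)))) /
          (2 + Real.cos ((2*((j:ℕ):ℝ)+1) * Real.pi / (2*((N:ℝ)+1)))) : ℝ) : ℂ)) := by
  have hinj : Function.Injective fun j => femEigenvalue c h (femAngle N j) := fun a b hab =>
    femAngle_injective N (femEigenvalue_injOn hc.ne' hh.ne'
      (Set.Ioo_subset_Icc_self (femAngle_mem_Ioo N a))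
      (Set.Ioo_subset_Icc_self (femAngle_mem_Ioo N b)) hab)
  exact ⟨(isUnit_iff_isUnit_det _).mpr (massFEM_det_ne_zero _).isUnit, hinj,
    exists_mulVec_eq_smul_iff_of_injective _ (Complex.ofReal_injective.comp hinj)
      (exists_ne_zero_mulVec_eq_femEigenvalue_smul c h N)⟩

/-- M is invertible and the eigenvalues of M⁻¹A_h^{FEM} are exactly
the N+1 distinct numbers λ_j = (c²/h²)(6 − 6cos θ_j)/(2 + cos θ_j),
θ_j = (2j−1)π/(2(N+1)), j = 1,…,N+1 (encoded j : Fin (N+1), "j" = j.val+1). -/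
theorem MinvStiff_eigenvalues (c h : ℝ) (hc : 0 < c) (hh : 0 < h) (N : ℕ) (hN : 1 ≤ N) :
    IsUnit (massFEM (N+1)) ∧
    Function.Injective (fun j : Fin (N+1) =>
      (c^2/h^2) * (6 - 6*Real.cos ((2*((j:ℕ):ℝ)+1) * Real.pi / (2*((N:ℝ)+1)))) /
        (2 + Real.cos ((2*((j:ℕ):ℝ)+1) * Real.pi / (2*((N:ℝ)+1))))) ∧
    (∀ μ : ℂ, (∃ w : Fin (N+1) → ℂ, w ≠ 0 ∧
        (((massFEM (N+1))⁻¹ * stiffFEM c h (N+1)).map (fun x => (x:ℂ))).mulVec w = μ • w) ↔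
      ∃ j : Fin (N+1),
        μ = (((c^2/h^2) * (6 - 6*Real.cos ((2*((j:ℕ):ℝ)+1) * Real.pi / (2*((N:ℝ)+1)))) /
          (2 + Real.cos ((2*((j:ℕ):ℝ)+1) * Real.pi / (2*((N:ℝ)+1)))) : ℝ) : ℂ)) :=
  MinvStiff_eigenvalues_general c h hc hh N
end

section
/- Let N ≥ 1, c > 0, and 0 < ξ < c, and define the complex polynomial p(z) = z^{4N+6} + (ξ/c) z^{4N+5} − (ξ/c) z + 1. Then: (i) p(i) = p(−i) = 0; (ii) if p(z) = 0 and |z| = 1, then z = i or z = −i; (iii) if p(z) = 0 and Re z = 0, then z = i or z = −i. -/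
/-!
Write `a = ξ/c` and `p(z) = z^(n+1) + a z^n - a z + 1` with `n = 4N+5`. Since `(±i)^n = ±i`
and `(±i)^2 = -1`, `p(±i) = 0`.
On `|z| = 1` a root satisfies `|z + a| = |z^n (z + a)| = |a z - 1|`, which expands to
`4 a Re z = 0`; so roots on the unit circle are purely imaginary. For `z = t i` the real part of
`p(z)` is `1 - t^(n+1)`, and `n + 1` is even, so `t = ±1`.
-/

open Complex

lemma pow_eq_self_of_mod_four_eq_one {M : Type*} [Monoid M] {w : M} (hw : w ^ 4 = 1) {n : ℕ}
    (hn : n % 4 = 1) : w ^ n = w := by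
  rw [← Nat.div_add_mod n 4, hn, pow_add, pow_mul, hw, one_pow, one_mul, pow_one]

lemma root_of_sq_eq_neg_one {R : Type*} [CommRing R] {w : R} (hw : w ^ 2 = -1) {n : ℕ}
    (hn : n % 4 = 1) (a : R) : w ^ (n + 1) + a * w ^ n - a * w + 1 = 0 := by
  have hwn : w ^ n = w := pow_eq_self_of_mod_four_eq_one (by rw [pow_mul' w 2 2, hw]; norm_num) hn
  rw [pow_succ, hwn, ← sq, hw]
  ring

lemma re_eq_zero_of_root_of_norm_eq_one {n : ℕ} {a : ℝ} (ha : a ≠ 0) {z : ℂ} (hz : ‖z‖ = 1)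
    (h : z ^ (n + 1) + a * z ^ n - a * z + 1 = 0) : z.re = 0 := by
  have hfactor : z ^ n * (z + a) = a * z - 1 := by linear_combination h
  have hnorm : ‖z + a‖ = ‖a * z - 1‖ := by
    simpa [norm_mul, norm_pow, hz] using congrArg norm hfactor
  have hnormSq : normSq (z + a) = normSq (a * z - 1) := by
    rw [← Complex.sq_norm, ← Complex.sq_norm, hnorm]
  have hunit : z.re ^ 2 + z.im ^ 2 = 1 := by
    have := Complex.sq_norm z
    rw [hz, normSq_apply] at this
    linarith
  simp only [normSq_apply, add_re, add_im, sub_re, sub_im, mul_re, mul_im, ofReal_re, ofReal_im,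
    one_re, one_im] at hnormSq
  have hre_mul : 4 * a * z.re = 0 := by linear_combination hnormSq + (a ^ 2 - 1) * hunit
  simpa [ha] using hre_mul

lemma eq_I_or_neg_I_of_root_of_re_eq_zero {n : ℕ} (hn : n % 4 = 1) {a : ℝ} {z : ℂ}
    (hre : z.re = 0) (h : z ^ (n + 1) + a * z ^ n - a * z + 1 = 0) : z = I ∨ z = -I := by
  have hz : z = z.im * I := by apply Complex.ext <;> simp [hre]
  have hIn : I ^ n = I := pow_eq_self_of_mod_four_eq_one I_pow_four hn
  have hre_root : 1 - z.im ^ (n + 1) = 0 := by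
    rw [hz, mul_pow, mul_pow, pow_succ I, hIn, I_mul_I] at h
    simpa [← ofReal_pow, sub_eq_neg_add, add_comm] using congrArg re h
  rcases (pow_eq_one_iff_of_ne_zero n.succ_ne_zero).1 (by linarith : z.im ^ (n + 1) = 1) with
    h1 | ⟨h1, -⟩
  · left; rw [hz, h1]; simp
  · right; rw [hz, h1]; simp

theorem charPoly_roots_on_circle_general (N : ℕ) (c ξ : ℝ) (hc : 0 < c)
    (hξ0 : 0 < ξ) :
    (fun z : ℂ => z^(4*N+6) + ((ξ/c : ℝ) : ℂ)*z^(4*N+5) - ((ξ/c : ℝ) : ℂ)*z + 1) I = 0 ∧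
    (fun z : ℂ => z^(4*N+6) + ((ξ/c : ℝ) : ℂ)*z^(4*N+5) - ((ξ/c : ℝ) : ℂ)*z + 1) (-I) = 0 ∧
    (∀ z : ℂ, z^(4*N+6) + ((ξ/c : ℝ) : ℂ)*z^(4*N+5) - ((ξ/c : ℝ) : ℂ)*z + 1 = 0 →
      ‖z‖ = 1 → z = I ∨ z = -I) ∧
    (∀ z : ℂ, z^(4*N+6) + ((ξ/c : ℝ) : ℂ)*z^(4*N+5) - ((ξ/c : ℝ) : ℂ)*z + 1 = 0 →
      z.re = 0 → z = I ∨ z = -I) := by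
  have hn : (4 * N + 5) % 4 = 1 := by omega
  have ha : ξ / c ≠ 0 := (div_pos hξ0 hc).ne'
  exact ⟨root_of_sq_eq_neg_one I_sq hn _, root_of_sq_eq_neg_one (by rw [neg_sq, I_sq]) hn _,
    fun z h hz =>
      eq_I_or_neg_I_of_root_of_re_eq_zero hn (re_eq_zero_of_root_of_norm_eq_one ha hz h) h,
    fun z h hre => eq_I_or_neg_I_of_root_of_re_eq_zero hn hre h⟩

/-- for p(z) = z^{4N+6} + (ξ/c)z^{4N+5} − (ξ/c)z + 1 with 0 < ξ < c:
(i) p(±i) = 0; (ii) the only roots on the unit circle are ±i; (iii) the only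
purely imaginary roots are ±i. -/
theorem charPoly_roots_on_circle (N : ℕ) (hN : 1 ≤ N) (c ξ : ℝ) (hc : 0 < c)
    (hξ0 : 0 < ξ) (hξc : ξ < c) :
    (fun z : ℂ => z^(4*N+6) + ((ξ/c : ℝ) : ℂ)*z^(4*N+5) - ((ξ/c : ℝ) : ℂ)*z + 1) I = 0 ∧
    (fun z : ℂ => z^(4*N+6) + ((ξ/c : ℝ) : ℂ)*z^(4*N+5) - ((ξ/c : ℝ) : ℂ)*z + 1) (-I) = 0 ∧
    (∀ z : ℂ, z^(4*N+6) + ((ξ/c : ℝ) : ℂ)*z^(4*N+5) - ((ξ/c : ℝ) : ℂ)*z + 1 = 0 →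
      ‖z‖ = 1 → z = I ∨ z = -I) ∧
    (∀ z : ℂ, z^(4*N+6) + ((ξ/c : ℝ) : ℂ)*z^(4*N+5) - ((ξ/c : ℝ) : ℂ)*z + 1 = 0 →
      z.re = 0 → z = I ∨ z = -I) :=
  charPoly_roots_on_circle_general N c ξ hc hξ0
end

section
/- Let N ≥ 1, c > 0, and 0 < ξ < c, and define the complex polynomial p(z) = z^{4N+6} + (ξ/c) z^{4N+5} − (ξ/c) z + 1. If p(z) = 0 and Re z > 0, then |z| < 1; if p(z) = 0 and Re z < 0, then |z| > 1. -/
open Complex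

/-!
With `a = ξ/c ∈ (0, 1)` and `m = 4N + 5`, `p(z) = 0` says `z^m (z + a) = a z - 1`. The identity
`|a z - 1|² - |z + a|² = (1 - a²)(1 - |z|²) - 4 a Re z` shows that for `Re z > 0`, `|z| ≥ 1` the
right side is the shorter one, while `|z^m| ≥ 1` makes it the longer one; symmetrically for
`Re z < 0`, `|z| ≤ 1`.
-/

namespace Complex

theorem normSq_ofReal_mul_sub_one_sub_normSq_add_ofReal (a : ℝ) (z : ℂ) :
    normSq (a * z - 1) - normSq (z + a) = (1 - a ^ 2) * (1 - normSq z) - 4 * a * z.re := by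
  simp only [normSq_apply, sub_re, sub_im, add_re, add_im, mul_re, mul_im, ofReal_re, ofReal_im,
    one_re, one_im]
  ring

section

variable {a : ℝ} {z : ℂ}

theorem norm_ofReal_mul_sub_one_lt_norm_add_ofReal (ha0 : 0 < a) (ha1 : a ≤ 1) (hre : 0 < z.re)
    (hz : 1 ≤ ‖z‖) : ‖(a : ℂ) * z - 1‖ < ‖z + a‖ := by
  have hnormSq : 1 ≤ normSq z := by rw [normSq_eq_norm_sq]; exact one_le_pow₀ hz
  have hdiff := normSq_ofReal_mul_sub_one_sub_normSq_add_ofReal a z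
  have hlt : normSq (a * z - 1) < normSq (z + a) := by
    nlinarith [mul_pos ha0 hre, mul_nonneg (by nlinarith : 0 ≤ 1 - a ^ 2) (sub_nonneg.2 hnormSq)]
  rw [normSq_eq_norm_sq, normSq_eq_norm_sq] at hlt
  exact lt_of_pow_lt_pow_left₀ 2 (norm_nonneg _) hlt

theorem norm_add_ofReal_lt_norm_ofReal_mul_sub_one (ha0 : 0 < a) (ha1 : a ≤ 1) (hre : z.re < 0)
    (hz : ‖z‖ ≤ 1) : ‖z + a‖ < ‖(a : ℂ) * z - 1‖ := by
  have hnormSq : normSq z ≤ 1 := by rw [normSq_eq_norm_sq]; exact pow_le_one₀ (norm_nonneg z) hz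
  have hdiff := normSq_ofReal_mul_sub_one_sub_normSq_add_ofReal a z
  have hlt : normSq (z + a) < normSq (a * z - 1) := by
    nlinarith [mul_pos ha0 (neg_pos.2 hre),
      mul_nonneg (by nlinarith : 0 ≤ 1 - a ^ 2) (sub_nonneg.2 hnormSq)]
  rw [normSq_eq_norm_sq, normSq_eq_norm_sq] at hlt
  exact lt_of_pow_lt_pow_left₀ 2 (norm_nonneg _) hlt

variable (m : ℕ) (ha0 : 0 < a) (ha1 : a ≤ 1) (h : z ^ m * (z + a) = a * z - 1)
include ha0 ha1 h

theorem norm_lt_one_of_pow_mul_add_ofReal_eq (hre : 0 < z.re) : ‖z‖ < 1 := by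
  by_contra! hz
  refine lt_irrefl ‖(a : ℂ) * z - 1‖ ?_
  calc ‖(a : ℂ) * z - 1‖ < ‖z + a‖ := norm_ofReal_mul_sub_one_lt_norm_add_ofReal ha0 ha1 hre hz
    _ ≤ ‖z‖ ^ m * ‖z + a‖ := le_mul_of_one_le_left (norm_nonneg _) (one_le_pow₀ hz)
    _ = ‖(a : ℂ) * z - 1‖ := by rw [← norm_pow, ← norm_mul, h]

theorem one_lt_norm_of_pow_mul_add_ofReal_eq (hre : z.re < 0) : 1 < ‖z‖ := by
  by_contra! hz
  refine lt_irrefl ‖(a : ℂ) * z - 1‖ ?_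
  calc ‖(a : ℂ) * z - 1‖ = ‖z‖ ^ m * ‖z + a‖ := by rw [← norm_pow, ← norm_mul, h]
    _ ≤ ‖z + a‖ := mul_le_of_le_one_left (norm_nonneg _) (pow_le_one₀ (norm_nonneg z) hz)
    _ < ‖(a : ℂ) * z - 1‖ := norm_add_ofReal_lt_norm_ofReal_mul_sub_one ha0 ha1 hre hz

end

end Complex

theorem charPoly_roots_location_general (N : ℕ) (c ξ : ℝ) (hc : 0 < c)
    (hξ0 : 0 < ξ) (hξc : ξ < c) :
    ∀ z : ℂ, z^(4*N+6) + ((ξ/c : ℝ) : ℂ)*z^(4*N+5) - ((ξ/c : ℝ) : ℂ)*z + 1 = 0 →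
      (0 < z.re → ‖z‖ < 1) ∧ (z.re < 0 → 1 < ‖z‖) := by
  intro z hz
  have ha0 : 0 < ξ / c := div_pos hξ0 hc
  have ha1 : ξ / c ≤ 1 := ((div_lt_one hc).2 hξc).le
  have h : z ^ (4 * N + 5) * (z + ((ξ / c : ℝ) : ℂ)) = ((ξ / c : ℝ) : ℂ) * z - 1 := by
    linear_combination hz
  exact ⟨norm_lt_one_of_pow_mul_add_ofReal_eq _ ha0 ha1 h,
    one_lt_norm_of_pow_mul_add_ofReal_eq _ ha0 ha1 h⟩

/-- for p(z) = z^{4N+6} + (ξ/c)z^{4N+5} − (ξ/c)z + 1 with 0 < ξ < c: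
roots with positive real part lie inside the unit circle, and roots with negative
real part lie outside. -/
theorem charPoly_roots_location (N : ℕ) (hN : 1 ≤ N) (c ξ : ℝ) (hc : 0 < c)
    (hξ0 : 0 < ξ) (hξc : ξ < c) :
    ∀ z : ℂ, z^(4*N+6) + ((ξ/c : ℝ) : ℂ)*z^(4*N+5) - ((ξ/c : ℝ) : ℂ)*z + 1 = 0 →
      (0 < z.re → ‖z‖ < 1) ∧ (z.re < 0 → 1 < ‖z‖) :=
  charPoly_roots_location_general N c ξ hc hξ0 hξc
end

section
/- Let L, c > 0, ξ > 0, N ≥ 1, and h = L/(N+1). For C¹ functions v_0 ≡ 0, v_1, …, v_{N+1} : [0,∞) → ℝ, define the discrete energy E_h^{FEM}(t) = (h/12)·[ |v̇_{N+1}|² + Σ_{j=0}^{N} ( 2|v̇_j|² + |v̇_j + v̇_{j+1}|² + 6c²|(v_{j+1} − v_j)/h|² ) ], the auxiliary functional F_h^{FEM}(t) = h·Σ_{j=1}^{N} ( (v̇_{j+1} + 4v̇_j + v̇_{j−1})/6 )·j·(v_{j+1} − v_{j−1})/2 + (L/6)·(2v̇_{N+1} + v̇_N)·(v_{N+1} −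 v_N), and the Lyapunov functional L_h^{FEM}(t) = E_h^{FEM}(t) + δ·F_h^{FEM}(t). Then for every 0 < δ < c/L and all t ≥ 0, (1 − Lδ/c)·E_h^{FEM}(t) ≤ L_h^{FEM}(t) ≤ (1 + Lδ/c)·E_h^{FEM}(t). -/
open Finset

set_option maxHeartbeats 1000000

lemma FEM_key (c : ℝ) (hc : 0 < c) (N : ℕ) (a B θ : ℕ → ℝ) (ha0 : a 0 = 0)
    (hθ : ∀ i ∈ range N, 0 ≤ θ i ∧ θ i ≤ 1) (ε : ℝ) (hε1 : -1 ≤ ε) (hε2 : ε ≤ 1) :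
    ε * ((∑ i ∈ range N, 6*c*θ i*((a (i+2)+4*a (i+1)+a i)/6)*(B (i+1) + B i))
      + 2*c*(2*a (N+1)+a N)*(B N))
    ≤ (a (N+1))^2 + ∑ j ∈ range (N+1),
        (2*(a j)^2 + (a j + a (j+1))^2 + 6*c^2*(B j)^2) := by
  have step1 : ∀ i ∈ range N,
      ε*(6*c*θ i*((a (i+2)+4*a (i+1)+a i)/6)*(B (i+1) + B i))
      ≤ 2*(a (i+1))^2 + (1/2)*(a i + a (i+1))^2 + (1/2)*(a (i+1) + a (i+2))^2
        + 3*c^2*(B (i+1))^2 + 3*c^2*(B i)^2 := by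
    intro i hi
    obtain ⟨hθ0, hθ1⟩ := hθ i hi
    set m := (a (i+2)+4*a (i+1)+a i)/6 with hm
    have hρ1 : -1 ≤ ε * θ i := by nlinarith [mul_nonneg hθ0 (by linarith : (0:ℝ) ≤ 1 + ε)]
    have hρ2 : ε * θ i ≤ 1 := by nlinarith [mul_nonneg hθ0 (by linarith : (0:ℝ) ≤ 1 - ε)]
    have hu1 : 6*c*m*(B (i+1) + B i) ≤ 6*m^2 + 3*c^2*(B (i+1))^2 + 3*c^2*(B i)^2 := by
      nlinarith [sq_nonneg (m - c*B (i+1)), sq_nonneg (m - c*B i)]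
    have hu2 : -(6*m^2 + 3*c^2*(B (i+1))^2 + 3*c^2*(B i)^2) ≤ 6*c*m*(B (i+1) + B i) := by
      nlinarith [sq_nonneg (m + c*B (i+1)), sq_nonneg (m + c*B i)]
    have hstep : ε*(6*c*θ i*m*(B (i+1) + B i))
        ≤ 6*m^2 + 3*c^2*(B (i+1))^2 + 3*c^2*(B i)^2 := by
      nlinarith [mul_nonneg (by linarith : (0:ℝ) ≤ 1 - ε*θ i)
          (by linarith : (0:ℝ) ≤ 6*c*m*(B (i+1) + B i) + (6*m^2 + 3*c^2*(B (i+1))^2 + 3*c^2*(B i)^2)),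
        mul_nonneg (by linarith : (0:ℝ) ≤ 1 + ε*θ i)
          (by linarith : (0:ℝ) ≤ (6*m^2 + 3*c^2*(B (i+1))^2 + 3*c^2*(B i)^2) - 6*c*m*(B (i+1) + B i))]
    have hm6 : 6*m^2 ≤ 2*(a (i+1))^2 + (1/2)*(a i + a (i+1))^2 + (1/2)*(a (i+1) + a (i+2))^2 := by
      rw [hm]
      nlinarith [sq_nonneg (a i - a (i+2)), sq_nonneg (a i - a (i+1)),
        sq_nonneg (a (i+2) - a (i+1))]
    linarith
  have step2 : ε*(2*c*(2*a (N+1)+a N)*(B N))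
      ≤ (1/3)*(2*a (N+1)+a N)^2 + 3*c^2*(B N)^2 := by
    have hu1 : 2*c*(2*a (N+1)+a N)*(B N)
        ≤ (1/3)*(2*a (N+1)+a N)^2 + 3*c^2*(B N)^2 := by
      nlinarith [sq_nonneg ((2*a (N+1)+a N) - 3*c*B N)]
    have hu2 : -((1/3)*(2*a (N+1)+a N)^2 + 3*c^2*(B N)^2)
        ≤ 2*c*(2*a (N+1)+a N)*(B N) := by
      nlinarith [sq_nonneg ((2*a (N+1)+a N) + 3*c*B N)]
    nlinarith [mul_nonneg (by linarith : (0:ℝ) ≤ 1 - ε)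
        (by linarith : (0:ℝ) ≤ 2*c*(2*a (N+1)+a N)*(B N) + ((1/3)*(2*a (N+1)+a N)^2 + 3*c^2*(B N)^2)),
      mul_nonneg (by linarith : (0:ℝ) ≤ 1 + ε)
        (by linarith : (0:ℝ) ≤ ((1/3)*(2*a (N+1)+a N)^2 + 3*c^2*(B N)^2) - 2*c*(2*a (N+1)+a N)*(B N))]
  have hmul : ε * ((∑ i ∈ range N, 6*c*θ i*((a (i+2)+4*a (i+1)+a i)/6)*(B (i+1) + B i))
      + 2*c*(2*a (N+1)+a N)*(B N))
      = (∑ i ∈ range N, ε*(6*c*θ i*((a (i+2)+4*a (i+1)+a i)/6)*(B (i+1) + B i)))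
        + ε*(2*c*(2*a (N+1)+a N)*(B N)) := by
    rw [mul_add, mul_sum]
  rw [hmul]
  have hsum1 := Finset.sum_le_sum step1
  have hsplit : ∑ i ∈ range N, (2*(a (i+1))^2 + (1/2)*(a i + a (i+1))^2
        + (1/2)*(a (i+1) + a (i+2))^2 + 3*c^2*(B (i+1))^2 + 3*c^2*(B i)^2)
      = (∑ i ∈ range N, 2*(a (i+1))^2) + (∑ i ∈ range N, (1/2)*(a i + a (i+1))^2)
        + (∑ i ∈ range N, (1/2)*(a (i+1) + a (i+2))^2)
        + (∑ i ∈ range N, 3*c^2*(B (i+1))^2) + (∑ i ∈ range N, 3*c^2*(B i)^2) := by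
    simp [Finset.sum_add_distrib]
  have f1 : ∑ i ∈ range N, 2*(a (i+1))^2
      = (∑ j ∈ range (N+1), 2*(a j)^2) - 2*(a 0)^2 := by
    rw [Finset.sum_range_succ']; ring
  have f2 : ∑ i ∈ range N, (1/2)*(a i + a (i+1))^2
      = (1/2) * ((∑ j ∈ range (N+1), (a j + a (j+1))^2) - (a N + a (N+1))^2) := by
    rw [Finset.sum_range_succ, ← Finset.mul_sum]; ring
  have f3 : ∑ i ∈ range N, (1/2)*(a (i+1) + a (i+2))^2
      = (1/2) * ((∑ j ∈ range (N+1), (a j + a (j+1))^2) - (a 0 + a 1)^2) := by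
    rw [Finset.sum_range_succ', ← Finset.mul_sum]; ring
  have f4 : ∑ i ∈ range N, 3*c^2*(B (i+1))^2
      = 3*c^2 * ((∑ j ∈ range (N+1), (B j)^2) - (B 0)^2) := by
    rw [Finset.sum_range_succ', ← Finset.mul_sum]; ring
  have f5 : ∑ i ∈ range N, 3*c^2*(B i)^2
      = 3*c^2 * ((∑ j ∈ range (N+1), (B j)^2) - (B N)^2) := by
    rw [Finset.sum_range_succ, ← Finset.mul_sum]; ring
  have fR : ∑ j ∈ range (N+1), (2*(a j)^2 + (a j + a (j+1))^2 + 6*c^2*(B j)^2)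
      = (∑ j ∈ range (N+1), 2*(a j)^2) + (∑ j ∈ range (N+1), (a j + a (j+1))^2)
        + 6*c^2*(∑ j ∈ range (N+1), (B j)^2) := by
    simp [Finset.sum_add_distrib, Finset.mul_sum]
  have hedge : (1/3)*(2*a (N+1)+a N)^2 ≤ (a (N+1))^2 + (1/2)*(a N + a (N+1))^2 := by
    nlinarith [sq_nonneg (a (N+1) - a N)]
  have hB0 : (0:ℝ) ≤ 3*c^2*(B 0)^2 := by positivity
  have hs0 : (0:ℝ) ≤ (1/2)*(a 0 + a 1)^2 := by positivity
  have ha0sq : (a 0)^2 = 0 := by rw [ha0]; ring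
  linarith [hsum1, step2, hsplit, f1, f2, f3, f4, f5, fR, hedge, hB0, hs0, ha0sq]

/-- equivalence of the Lyapunov functional
L_h^{FEM} = E_h^{FEM} + δF_h^{FEM} with the discrete energy E_h^{FEM}:
(1 − Lδ/c)E ≤ L ≤ (1 + Lδ/c)E for 0 < δ < c/L. -/
theorem FEM_Lyapunov_equivalence (L c ξ : ℝ) (hL : 0 < L) (hc : 0 < c) (hξ : 0 < ξ)
    (N : ℕ) (hN : 1 ≤ N) (h : ℝ) (hh : h = L/((N:ℝ)+1))
    (v : ℕ → ℝ → ℝ)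
    (hreg : ∀ j ≤ N+1, ContDiff ℝ 1 (v j))
    (h0 : ∀ t : ℝ, v 0 t = 0)
    (E F Lyap : ℝ → ℝ)
    (hE : ∀ t, E t = (h/12) * ((deriv (v (N+1)) t)^2
      + ∑ j ∈ range (N+1), (2*(deriv (v j) t)^2
        + (deriv (v j) t + deriv (v (j+1)) t)^2
        + 6*c^2*((v (j+1) t - v j t)/h)^2)))
    (hF : ∀ t, F t = h * ∑ j ∈ Icc 1 N,
        ((deriv (v (j+1)) t + 4*deriv (v j) t + deriv (v (j-1)) t)/6)
          * (j:ℝ) * ((v (j+1) t - v (j-1) t)/2)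
      + (L/6) * (2*deriv (v (N+1)) t + deriv (v N) t) * (v (N+1) t - v N t))
    (δ : ℝ) (hδ0 : 0 < δ) (hδ1 : δ < c/L)
    (hLyap : ∀ t, Lyap t = E t + δ * F t) :
    ∀ t : ℝ, 0 ≤ t →
      (1 - L*δ/c) * E t ≤ Lyap t ∧ Lyap t ≤ (1 + L*δ/c) * E t := by
  have hh0 : 0 < h := by rw [hh]; positivity
  have hhne : h ≠ 0 := ne_of_gt hh0
  have hLne : L ≠ 0 := ne_of_gt hL
  have hcne : c ≠ 0 := ne_of_gt hc
  have hLh : h * ((N:ℝ)+1) = L := by rw [hh]; field_simp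
  have hv0 : v 0 = fun _ => (0:ℝ) := funext h0
  intro t _
  have ha0 : deriv (v 0) t = 0 := by rw [hv0]; simp
  have hθ : ∀ i ∈ range N, 0 ≤ ((i:ℝ)+1)*h/L ∧ ((i:ℝ)+1)*h/L ≤ 1 := by
    intro i hi
    simp only [Finset.mem_range] at hi
    have hi' : (i:ℝ) + 1 ≤ (N:ℝ) + 1 := by
      have : (i:ℝ) ≤ (N:ℝ) := by exact_mod_cast hi.le
      linarith
    constructor
    · positivity
    · rw [div_le_one hL]
      nlinarith [mul_le_mul_of_nonneg_right hi' hh0.le]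
  have main : ∀ ε : ℝ, -1 ≤ ε → ε ≤ 1 → ε * F t ≤ (L/c) * E t := by
    intro ε hε1 hε2
    have key : ε * ((∑ i ∈ range N, 6*c*(((i:ℝ)+1)*h/L)
          *((deriv (v (i+2)) t + 4*deriv (v (i+1)) t + deriv (v i) t)/6)
          *((v (i+2) t - v (i+1) t)/h + (v (i+1) t - v i t)/h))
        + 2*c*(2*deriv (v (N+1)) t + deriv (v N) t)*((v (N+1) t - v N t)/h))
        ≤ (deriv (v (N+1)) t)^2 + ∑ j ∈ range (N+1),
          (2*(deriv (v j) t)^2 + (deriv (v j) t + deriv (v (j+1)) t)^2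
            + 6*c^2*((v (j+1) t - v j t)/h)^2) :=
      FEM_key c hc N (fun j => deriv (v j) t) (fun j => (v (j+1) t - v j t)/h)
        (fun i => ((i:ℝ)+1)*h/L) ha0 hθ ε hε1 hε2
    have heqF : F t = (L*h/(12*c)) * ((∑ i ∈ range N, 6*c*(((i:ℝ)+1)*h/L)
          *((deriv (v (i+2)) t + 4*deriv (v (i+1)) t + deriv (v i) t)/6)
          *((v (i+2) t - v (i+1) t)/h + (v (i+1) t - v i t)/h))
        + 2*c*(2*deriv (v (N+1)) t + deriv (v N) t)*((v (N+1) t - v N t)/h)) := by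
      rw [hF t, show Icc 1 N = Ico 1 (N+1) from (Finset.Ico_add_one_right_eq_Icc 1 N).symm,
        Finset.sum_Ico_eq_sum_range]
      simp only [Nat.add_sub_cancel]
      rw [Finset.mul_sum, mul_add (L*h/(12*c)), Finset.mul_sum]
      congr 1
      · refine Finset.sum_congr rfl fun i _ => ?_
        have e1 : 1 + i + 1 = i + 2 := by omega
        have e2 : 1 + i - 1 = i := by omega
        have e3 : 1 + i = i + 1 := by omega
        rw [e1, e2, e3]
        push_cast
        field_simp
        ring
      · field_simp
        ring
    have heqE : (L/c) * E t = (L*h/(12*c)) * ((deriv (v (N+1)) t)^2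
        + ∑ j ∈ range (N+1), (2*(deriv (v j) t)^2
          + (deriv (v j) t + deriv (v (j+1)) t)^2
          + 6*c^2*((v (j+1) t - v j t)/h)^2)) := by
      rw [hE t]; field_simp
    have hpos : (0:ℝ) ≤ L*h/(12*c) := by positivity
    have hstep : ε * F t = (L*h/(12*c)) * (ε * ((∑ i ∈ range N, 6*c*(((i:ℝ)+1)*h/L)
          *((deriv (v (i+2)) t + 4*deriv (v (i+1)) t + deriv (v i) t)/6)
          *((v (i+2) t - v (i+1) t)/h + (v (i+1) t - v i t)/h))
        + 2*c*(2*deriv (v (N+1)) t + deriv (v N) t)*((v (N+1) t - v N t)/h))) := by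
      rw [heqF]; ring
    rw [hstep, heqE]
    exact mul_le_mul_of_nonneg_left key hpos
  have k1 := main 1 (by norm_num) (by norm_num)
  have k2 := main (-1) (by norm_num) (by norm_num)
  have m1 := mul_le_mul_of_nonneg_left k1 hδ0.le
  have m2 := mul_le_mul_of_nonneg_left k2 hδ0.le
  have e : δ * (L/c * E t) = L*δ/c * E t := by ring
  rw [hLyap t]
  constructor
  · linarith
  · linarith
end
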